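/- arXiv:1810.07766 — 8 statements merged into one kernel-verified Lean document; each statement's English description precedes it below -/
import Mathlib

section
/- Let X^{(1)},…,X^{(n)} and G^{(1)},…,G^{(n)} be fixed real matrices, where X^{(j)} and G^{(j)} are d_j × n, and set V^{(j)} = X^{(j)} − γ·G^{(j)} for a real γ. Let W^{(1)},…,W^{(n)} be independent random n×n matrices, each satisfying E[W^{(j)}] = α₁·I_n + (1−α₁)·A_n and E[W^{(j)}·A_n·(W^{(j)})ᵀ] = α₂·I_n + (1−α₂)·A_n. Define the update increment Δx̄ ∈ ℝ^{d_1+⋯+d_n} as the concatenation over j = 1,…,n of the blocks (V^{(j)}·W^{(j)} − X^{(j)})·(𝟙/n), and let ḡ be the concatenation over j of G^{(j)}·(𝟙/n). Then E‖Δx̄‖² = (α₂/n)·∑_{j=1}^n Tr( V^{(j)}·(I_n − A_n)·(V^{(j)})ᵀ ) + γ²·‖ḡ‖², and E[Δx̄] = −γ·ḡ. -/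
open MeasureTheory ProbabilityTheory Matrix

/-- Measurable-space structure on matrices (entrywise). -/
instance matrixMeasurableSpace {m n α : Type*} [MeasurableSpace α] :
    MeasurableSpace (Matrix m n α) := by unfold Matrix; infer_instance

/-- The `n × n` matrix `A_n = (1/n)·𝟙𝟙ᵀ` with all entries `1/n`. -/
noncomputable def stdA (n : ℕ) : Matrix (Fin n) (Fin n) ℝ := Matrix.of fun _ _ => (1 : ℝ) / n

/-!
Each coordinate of a block of the increment has the form `v ⬝ᵥ y - c` with `y = W (𝟙/n)`,
`v` a row of `V` and `c` the matching entry of `X (𝟙/n)`. Since `A_n 𝟙 = 𝟙` and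
`(𝟙/n)(𝟙/n)ᵀ = A_n / n`, the hypotheses on `W` give `E[y] = 𝟙/n` and
`E[y yᵀ] = (α₂ I + (1 - α₂) A_n) / n`, so `Cov(y) = (α₂/n)(I - A_n)`. The bias–variance
decomposition `E[(v ⬝ᵥ y - c)²] = vᵀ Cov(y) v + (v ⬝ᵥ E[y] - c)²` then gives the claim, because
`v ⬝ᵥ 𝟙/n - c` is the corresponding entry of `(V - X)(𝟙/n) = -γ G (𝟙/n)`; summing over
coordinates turns the quadratic forms into traces.
-/

noncomputable def meanMatrix {Ω ι κ : Type*} [MeasurableSpace Ω] (μ : Measure Ω)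
    (M : Ω → Matrix ι κ ℝ) : Matrix ι κ ℝ :=
  Matrix.of fun a b => ∫ ω, M ω a b ∂μ

section RandomVector

variable {Ω ι κ : Type*} [MeasurableSpace Ω] {μ : Measure Ω}

lemma integral_dotProduct [Fintype ι] (v : ι → ℝ) {y : Ω → ι → ℝ}
    (hy : ∀ a, Integrable (fun ω => y ω a) μ) :
    ∫ ω, v ⬝ᵥ y ω ∂μ = v ⬝ᵥ fun a => ∫ ω, y ω a ∂μ := by
  simp only [dotProduct]
  rw [integral_finsetSum _ fun a _ => (hy a).const_mul (v a)]
  simp only [integral_const_mul]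

lemma integral_mulVec [Fintype κ] {M : Ω → Matrix ι κ ℝ}
    (hM : ∀ a b, Integrable (fun ω => M ω a b) μ) (w : κ → ℝ) (a : ι) :
    ∫ ω, (M ω *ᵥ w) a ∂μ = (meanMatrix μ M *ᵥ w) a := by
  simp only [mulVec, dotProduct_comm _ w]
  exact integral_dotProduct w (hM a)

lemma integrable_dotProduct [Fintype ι] (v : ι → ℝ) {y : Ω → ι → ℝ}
    (hy : ∀ a, Integrable (fun ω => y ω a) μ) : Integrable (fun ω => v ⬝ᵥ y ω) μ :=
  integrable_finsetSum _ fun a _ => (hy a).const_mul (v a)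

lemma integrable_mulVec [Fintype κ] {M : Ω → Matrix ι κ ℝ}
    (hM : ∀ a b, Integrable (fun ω => M ω a b) μ) (w : κ → ℝ) (a : ι) :
    Integrable (fun ω => (M ω *ᵥ w) a) μ := by
  simp only [mulVec, dotProduct_comm _ w]
  exact integrable_dotProduct w (hM a)

lemma memLp_dotProduct [Fintype ι] (v : ι → ℝ) {y : Ω → ι → ℝ}
    (hy : ∀ a, MemLp (fun ω => y ω a) 2 μ) : MemLp (fun ω => v ⬝ᵥ y ω) 2 μ :=
  memLp_finsetSum _ fun a _ => (hy a).const_mul (v a)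

lemma memLp_mulVec [Fintype κ] {M : Ω → Matrix ι κ ℝ}
    (hM : ∀ a b, MemLp (fun ω => M ω a b) 2 μ) (w : κ → ℝ) (a : ι) :
    MemLp (fun ω => (M ω *ᵥ w) a) 2 μ := by
  simp only [mulVec, dotProduct_comm _ w]
  exact memLp_dotProduct w (hM a)

lemma meanMatrix_smul (c : ℝ) (M : Ω → Matrix ι κ ℝ) :
    meanMatrix μ (fun ω => c • M ω) = c • meanMatrix μ M := by
  ext a b
  simp [meanMatrix, integral_const_mul]

lemma integral_dotProduct_sq [Fintype ι] (v : ι → ℝ) {y : Ω → ι → ℝ}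
    (hy : ∀ a, MemLp (fun ω => y ω a) 2 μ) :
    ∫ ω, (v ⬝ᵥ y ω) ^ 2 ∂μ = v ⬝ᵥ (meanMatrix μ (fun ω => vecMulVec (y ω) (y ω)) *ᵥ v) := by
  have hsq : ∀ ω, (v ⬝ᵥ y ω) ^ 2 = v ⬝ᵥ (vecMulVec (y ω) (y ω) *ᵥ v) := fun ω => by
    simp [vecMulVec_mulVec, dotProduct_comm (y ω) v, sq]
  simp_rw [hsq]
  rw [integral_dotProduct v fun a => ?_]
  · congr 1
    ext a
    exact integral_mulVec (fun a b => (hy a).integrable_mul (hy b)) v a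
  · exact integrable_finsetSum _ fun b _ => ((hy a).integrable_mul (hy b)).mul_const (v b)

lemma integral_sub_const_sq [IsProbabilityMeasure μ] {f : Ω → ℝ} (hf : MemLp f 2 μ) (c : ℝ) :
    ∫ ω, (f ω - c) ^ 2 ∂μ = (∫ ω, f ω ^ 2 ∂μ - (∫ ω, f ω ∂μ) ^ 2) + (∫ ω, f ω ∂μ - c) ^ 2 := by
  have hfc : MemLp (fun ω => f ω - c) 2 μ := hf.sub (memLp_const c)
  have hmean : ∫ ω, (f ω - c) ∂μ = ∫ ω, f ω ∂μ - c := by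
    rw [integral_sub (hf.integrable one_le_two) (integrable_const c), integral_const]
    simp
  have hvar := variance_sub_const hf.aestronglyMeasurable c
  rw [variance_eq_sub hfc, variance_eq_sub hf] at hvar
  simp only [Pi.pow_apply] at hvar
  rw [hmean] at hvar
  linarith

/-- Bias–variance decomposition: the matrix inside the quadratic form is the covariance of `y`. -/
lemma integral_dotProduct_sub_const_sq [Fintype ι] [IsProbabilityMeasure μ] (v : ι → ℝ) (c : ℝ)
    {y : Ω → ι → ℝ} (hy : ∀ a, MemLp (fun ω => y ω a) 2 μ) :
    ∫ ω, (v ⬝ᵥ y ω - c) ^ 2 ∂μ =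
      v ⬝ᵥ ((meanMatrix μ (fun ω => vecMulVec (y ω) (y ω)) -
          vecMulVec (fun a => ∫ ω, y ω a ∂μ) (fun a => ∫ ω, y ω a ∂μ)) *ᵥ v) +
        (v ⬝ᵥ (fun a => ∫ ω, y ω a ∂μ) - c) ^ 2 := by
  rw [integral_sub_const_sq (memLp_dotProduct v hy), integral_dotProduct_sq v hy,
    integral_dotProduct v fun a => (hy a).integrable one_le_two, sub_mulVec, dotProduct_sub,
    vecMulVec_mulVec]
  simp [dotProduct_comm v, sq]

end RandomVector

lemma mul_vecMulVec_mul_transpose {l m α : Type*} [CommSemiring α] [Fintype m]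
    (M : Matrix l m α) (x : m → α) : M * vecMulVec x x * Mᵀ = vecMulVec (M *ᵥ x) (M *ᵥ x) := by
  rw [mul_vecMulVec, vecMulVec_mul, vecMul_transpose]

lemma mul_mul_transpose_apply_self {l m α : Type*} [CommSemiring α] [Fintype m]
    (V : Matrix l m α) (M : Matrix m m α) (k : l) : (V * M * Vᵀ) k k = V k ⬝ᵥ (M *ᵥ V k) := by
  rw [dotProduct_mulVec]
  rfl

lemma stdA_mulVec_const (n : ℕ) (c : ℝ) : stdA n *ᵥ (fun _ => c) = fun _ => c := by
  ext a
  have hn : (n : ℝ) ≠ 0 := Nat.cast_ne_zero.mpr (Fin.pos a).ne'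
  simp only [mulVec, dotProduct, stdA, one_div, of_apply, Finset.sum_const, Finset.card_univ,
    Fintype.card_fin, nsmul_eq_mul]
  field_simp

lemma vecMulVec_const_inv (n : ℕ) :
    vecMulVec (fun _ : Fin n => (1 : ℝ) / n) (fun _ => 1 / n) = ((1 : ℝ) / n) • stdA n := by
  ext a b
  simp [stdA, vecMulVec_apply]

section Increment

variable {Ω : Type*} [MeasurableSpace Ω] {μ : Measure Ω} {n d : ℕ} {α₁ α₂ : ℝ}
  {W : Ω → Matrix (Fin n) (Fin n) ℝ}

lemma integral_mulVec_const_inv (hW : ∀ a b, Integrable (fun ω => W ω a b) μ)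
    (hW1 : meanMatrix μ W = α₁ • (1 : Matrix (Fin n) (Fin n) ℝ) + (1 - α₁) • stdA n) :
    (fun a => ∫ ω, (W ω *ᵥ fun _ => (1 : ℝ) / n) a ∂μ) = fun _ => (1 : ℝ) / n := by
  ext a
  rw [integral_mulVec hW, hW1, add_mulVec, smul_mulVec, smul_mulVec, one_mulVec,
    stdA_mulVec_const]
  simp only [Pi.add_apply, Pi.smul_apply, smul_eq_mul]
  ring

lemma meanMatrix_vecMulVec_mulVec_const_inv
    (hW2 : meanMatrix μ (fun ω => W ω * stdA n * (W ω)ᵀ) =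
      α₂ • (1 : Matrix (Fin n) (Fin n) ℝ) + (1 - α₂) • stdA n) :
    meanMatrix μ
        (fun ω => vecMulVec (W ω *ᵥ fun _ => (1 : ℝ) / n) (W ω *ᵥ fun _ => (1 : ℝ) / n)) =
      ((1 : ℝ) / n) • (α₂ • (1 : Matrix (Fin n) (Fin n) ℝ) + (1 - α₂) • stdA n) := by
  simp_rw [← mul_vecMulVec_mul_transpose, vecMulVec_const_inv, Matrix.mul_smul, Matrix.smul_mul]
  rw [meanMatrix_smul, hW2]

lemma mul_sub_mulVec_apply (V X : Matrix (Fin d) (Fin n) ℝ) (M : Matrix (Fin n) (Fin n) ℝ)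
    (u : Fin n → ℝ) (k : Fin d) : ((V * M - X) *ᵥ u) k = V k ⬝ᵥ (M *ᵥ u) - (X *ᵥ u) k := by
  rw [sub_mulVec, ← mulVec_mulVec]
  rfl

lemma dotProduct_const_inv_sub_mulVec {γ : ℝ} {V X G : Matrix (Fin d) (Fin n) ℝ}
    (hV : V = X - γ • G) (k : Fin d) :
    V k ⬝ᵥ (fun _ => (1 : ℝ) / n) - (X *ᵥ fun _ => (1 : ℝ) / n) k =
      -γ * (G *ᵥ fun _ => (1 : ℝ) / n) k := by
  change (V *ᵥ _) k - (X *ᵥ _) k = _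
  rw [← Pi.sub_apply, ← sub_mulVec, hV, sub_sub_cancel_left, neg_mulVec, smul_mulVec]
  simp

variable [IsProbabilityMeasure μ] {γ : ℝ} {V X G : Matrix (Fin d) (Fin n) ℝ}

lemma integrable_increment_sq (hWL2 : ∀ a b, MemLp (fun ω => W ω a b) 2 μ) (k : Fin d) :
    Integrable (fun ω => ((V * W ω - X) *ᵥ fun _ => (1 : ℝ) / n) k ^ 2) μ := by
  simp_rw [mul_sub_mulVec_apply]
  exact ((memLp_dotProduct _ (memLp_mulVec hWL2 _)).sub (memLp_const _)).integrable_sq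

lemma integral_increment (hV : V = X - γ • G) (hW : ∀ a b, Integrable (fun ω => W ω a b) μ)
    (hW1 : meanMatrix μ W = α₁ • (1 : Matrix (Fin n) (Fin n) ℝ) + (1 - α₁) • stdA n)
    (k : Fin d) :
    ∫ ω, ((V * W ω - X) *ᵥ fun _ => (1 : ℝ) / n) k ∂μ = -γ * (G *ᵥ fun _ => (1 : ℝ) / n) k := by
  have hy := integrable_mulVec hW fun _ => (1 : ℝ) / n
  simp_rw [mul_sub_mulVec_apply]
  rw [integral_sub (integrable_dotProduct _ hy) (integrable_const _),
    integral_const, probReal_univ, one_smul, integral_dotProduct _ hy,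
    integral_mulVec_const_inv hW hW1, dotProduct_const_inv_sub_mulVec hV]

lemma integral_increment_sq (hV : V = X - γ • G)
    (hWL2 : ∀ a b, MemLp (fun ω => W ω a b) 2 μ)
    (hW1 : meanMatrix μ W = α₁ • (1 : Matrix (Fin n) (Fin n) ℝ) + (1 - α₁) • stdA n)
    (hW2 : meanMatrix μ (fun ω => W ω * stdA n * (W ω)ᵀ) =
      α₂ • (1 : Matrix (Fin n) (Fin n) ℝ) + (1 - α₂) • stdA n)
    (k : Fin d) :
    ∫ ω, ((V * W ω - X) *ᵥ fun _ => (1 : ℝ) / n) k ^ 2 ∂μ =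
      α₂ / n * (V * ((1 : Matrix (Fin n) (Fin n) ℝ) - stdA n) * Vᵀ) k k +
        γ ^ 2 * (G *ᵥ fun _ => (1 : ℝ) / n) k ^ 2 := by
  have hcov : meanMatrix μ (fun ω => vecMulVec (W ω *ᵥ fun _ => (1 : ℝ) / n)
        (W ω *ᵥ fun _ => (1 : ℝ) / n)) - vecMulVec (fun _ => (1 : ℝ) / n) (fun _ => 1 / n) =
      (α₂ / n) • (1 - stdA n) := by
    rw [meanMatrix_vecMulVec_mulVec_const_inv hW2, vecMulVec_const_inv]
    module
  simp_rw [mul_sub_mulVec_apply]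
  rw [integral_dotProduct_sub_const_sq _ _ (memLp_mulVec hWL2 _),
    integral_mulVec_const_inv (fun a b => (hWL2 a b).integrable one_le_two) hW1, hcov,
    dotProduct_const_inv_sub_mulVec hV, mul_mul_transpose_apply_self, smul_mulVec,
    dotProduct_smul, smul_eq_mul]
  ring

end Increment

theorem statement3_general {Ω : Type*} [MeasurableSpace Ω] {μ : Measure Ω} [IsProbabilityMeasure μ]
    {n : ℕ} (dd : Fin n → ℕ) (γ α₁ α₂ : ℝ)
    (X G : (j : Fin n) → Matrix (Fin (dd j)) (Fin n) ℝ)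
    (V : (j : Fin n) → Matrix (Fin (dd j)) (Fin n) ℝ)
    (hV : ∀ j, V j = X j - γ • G j)
    (W : Fin n → Ω → Matrix (Fin n) (Fin n) ℝ)
    (hWL2 : ∀ j a b, MemLp (fun ω => W j ω a b) 2 μ)
    (hW1 : ∀ j, (Matrix.of fun a b => ∫ ω, W j ω a b ∂μ) =
        α₁ • (1 : Matrix (Fin n) (Fin n) ℝ) + (1 - α₁) • stdA n)
    (hW2 : ∀ j, (Matrix.of fun a b => ∫ ω, (W j ω * stdA n * (W j ω)ᵀ) a b ∂μ) =
        α₂ • (1 : Matrix (Fin n) (Fin n) ℝ) + (1 - α₂) • stdA n)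
    (Δ : (j : Fin n) → Fin (dd j) → Ω → ℝ)
    (hΔ : ∀ j k ω, Δ j k ω = ((V j * W j ω - X j).mulVec fun _ => (1 : ℝ) / n) k)
    (gbar : (j : Fin n) → Fin (dd j) → ℝ)
    (hgbar : ∀ j, gbar j = (G j).mulVec fun _ => (1 : ℝ) / n) :
    (∫ ω, ∑ j, ∑ k, Δ j k ω ^ 2 ∂μ) =
        (α₂ / n) * ∑ j, Matrix.trace (V j * ((1 : Matrix (Fin n) (Fin n) ℝ) - stdA n) * (V j)ᵀ)
          + γ ^ 2 * ∑ j, ∑ k, gbar j k ^ 2 ∧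
      ∀ j k, (∫ ω, Δ j k ω ∂μ) = -γ * gbar j k := by
  have hint : ∀ j k, Integrable (fun ω => Δ j k ω ^ 2) μ := fun j k => by
    simpa only [hΔ] using integrable_increment_sq (hWL2 j) k
  have hsq : ∀ j k, ∫ ω, Δ j k ω ^ 2 ∂μ =
      α₂ / n * (V j * ((1 : Matrix (Fin n) (Fin n) ℝ) - stdA n) * (V j)ᵀ) k k
        + γ ^ 2 * gbar j k ^ 2 := fun j k => by
    simpa only [hΔ, hgbar] using integral_increment_sq (hV j) (hWL2 j) (hW1 j) (hW2 j) k
  refine ⟨?_, fun j k => ?_⟩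
  · rw [integral_finsetSum _ fun j _ => integrable_finsetSum _ fun k _ => hint j k]
    simp_rw [integral_finsetSum _ fun k _ => hint _ k, hsq, Finset.sum_add_distrib, trace, diag,
      Finset.mul_sum]
  · simpa only [hΔ, hgbar] using
      integral_increment (hV j) (fun a b => (hWL2 j a b).integrable one_le_two) (hW1 j) k

/-- Let `X j, G j` be fixed `d_j × n` real matrices, `V j = X j − γ·G j`.
Let `W j` be independent random `n × n` matrices with `E[W j] = α₁I + (1−α₁)A_n` and
`E[W j · A_n · (W j)ᵀ] = α₂I + (1−α₂)A_n`.  Let `Δ` be the concatenation over `j` of the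
blocks `(V j · W j − X j)·(𝟙/n)` and `ḡ` the concatenation of `G j·(𝟙/n)`.  Then
`E‖Δ‖² = (α₂/n)·∑ j Tr(V j (I−A_n) (V j)ᵀ) + γ²‖ḡ‖²` and `E[Δ] = −γ·ḡ`. -/
theorem statement3 {Ω : Type*} [MeasurableSpace Ω] {μ : Measure Ω} [IsProbabilityMeasure μ]
    {n : ℕ} (hn : 1 ≤ n) (dd : Fin n → ℕ) (γ α₁ α₂ : ℝ)
    (hα₂ : 0 < α₂) (hα₁₂ : α₂ < α₁) (hα₁ : α₁ < 1)
    (X G : (j : Fin n) → Matrix (Fin (dd j)) (Fin n) ℝ)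
    (V : (j : Fin n) → Matrix (Fin (dd j)) (Fin n) ℝ)
    (hV : ∀ j, V j = X j - γ • G j)
    (W : Fin n → Ω → Matrix (Fin n) (Fin n) ℝ)
    (hWmeas : ∀ j, Measurable (W j))
    (hWL2 : ∀ j a b, MemLp (fun ω => W j ω a b) 2 μ)
    (hindep : iIndepFun W μ)
    (hW1 : ∀ j, (Matrix.of fun a b => ∫ ω, W j ω a b ∂μ) =
        α₁ • (1 : Matrix (Fin n) (Fin n) ℝ) + (1 - α₁) • stdA n)
    (hW2 : ∀ j, (Matrix.of fun a b => ∫ ω, (W j ω * stdA n * (W j ω)ᵀ) a b ∂μ) =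
        α₂ • (1 : Matrix (Fin n) (Fin n) ℝ) + (1 - α₂) • stdA n)
    (Δ : (j : Fin n) → Fin (dd j) → Ω → ℝ)
    (hΔ : ∀ j k ω, Δ j k ω = ((V j * W j ω - X j).mulVec fun _ => (1 : ℝ) / n) k)
    (gbar : (j : Fin n) → Fin (dd j) → ℝ)
    (hgbar : ∀ j, gbar j = (G j).mulVec fun _ => (1 : ℝ) / n) :
    (∫ ω, ∑ j, ∑ k, Δ j k ω ^ 2 ∂μ) =
        (α₂ / n) * ∑ j, Matrix.trace (V j * ((1 : Matrix (Fin n) (Fin n) ℝ) - stdA n) * (V j)ᵀ)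
          + γ ^ 2 * ∑ j, ∑ k, gbar j k ^ 2 ∧
      ∀ j k, (∫ ω, Δ j k ω ∂μ) = -γ * gbar j k :=
  statement3_general dd γ α₁ α₂ X G V hV W hWL2 hW1 hW2 Δ hΔ gbar hgbar
end

section
/- Let f_1,…,f_n : ℝ^d → ℝ be differentiable with L-Lipschitz gradients and f = (1/n)∑_{i=1}^n f_i. Fix points x^{(1)},…,x^{(n)} ∈ ℝ^d with mean x̄ = (1/n)∑_i x^{(i)}, and assume (1/n)∑_{i=1}^n ‖∇f_i(x̄) − ∇f(x̄)‖² ≤ ζ². Let g^{(1)},…,g^{(n)} be independent random vectors in ℝ^d with E[g^{(i)}] = ∇f_i(x^{(i)}) and E‖g^{(i)} − ∇f_i(x^{(i)})‖² ≤ σ². Set v^{(i)} = x^{(i)} − γ·g^{(i)} and v̄ = (1/n)∑_i v^{(i)}. Then E[ ∑_{i=1}^n ‖v^{(i)} − v̄‖² ] ≤ (2 + 12L²γ²)·∑_{i=1}^n ‖x^{(i)} − x̄‖² + 6nγ²ζ² + 2nγ²σ². -/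
/-!
Replacing the empirical mean `v̄` by any other centre can only increase `∑ ‖v i - v̄‖²`; we
use the centre `x̄ - γ ∇F(x̄)`. Then `v i` minus that centre is `(x i - x̄) - γ (g i - ∇F(x̄))`,
and `‖a - γ b‖² ≤ 2‖a‖² + 2γ²‖b‖²`. By the bias-variance decomposition, `E‖g i - ∇F(x̄)‖²` is at
most `σ²` plus the squared bias `‖∇f_i(x i) - ∇F(x̄)‖²`. Passing through `∇f_i(x̄)`, the
Lipschitz bound controls the bias by `L‖x i - x̄‖` plus the heterogeneity `‖∇f_i(x̄) - ∇F(x̄)‖`,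
whose mean square is at most `ζ²`.
-/

open MeasureTheory ProbabilityTheory Real
open scoped RealInnerProductSpace

section NormSq

variable {E : Type*} [SeminormedAddCommGroup E]

lemma norm_add_sq_le_two_mul (a b : E) : ‖a + b‖ ^ 2 ≤ 2 * (‖a‖ ^ 2 + ‖b‖ ^ 2) :=
  (pow_le_pow_left₀ (norm_nonneg _) (norm_add_le a b) 2).trans add_sq_le

lemma norm_sub_sq_le_two_mul (a b : E) : ‖a - b‖ ^ 2 ≤ 2 * (‖a‖ ^ 2 + ‖b‖ ^ 2) :=
  (pow_le_pow_left₀ (norm_nonneg _) (norm_sub_le a b) 2).trans add_sq_le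

end NormSq

section InnerProduct

variable {E : Type*} [NormedAddCommGroup E] [InnerProductSpace ℝ E]

lemma sum_norm_sub_mean_sq_le {ι : Type*} [Fintype ι] (u : ι → E) (c : E) :
    ∑ i, ‖u i - (1 / (Fintype.card ι : ℝ)) • ∑ k, u k‖ ^ 2 ≤ ∑ i, ‖u i - c‖ ^ 2 := by
  rcases isEmpty_or_nonempty ι with hι | hι
  · simp
  set m := (1 / (Fintype.card ι : ℝ)) • ∑ k, u k
  have hdev : ∑ i, (u i - m) = 0 := by
    rw [Finset.sum_sub_distrib, Finset.sum_const, Finset.card_univ, ← Nat.cast_smul_eq_nsmul ℝ,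
      smul_smul, mul_one_div_cancel (by positivity), one_smul, sub_self]
  have hsplit : ∑ i, ‖u i - c‖ ^ 2
      = ∑ i, ‖u i - m‖ ^ 2 + 2 * ⟪∑ i, (u i - m), m - c⟫ + Fintype.card ι * ‖m - c‖ ^ 2 := by
    simp only [← sub_add_sub_cancel (u _) m c, norm_add_sq_real, Finset.sum_add_distrib,
      ← Finset.mul_sum, sum_inner, Finset.sum_const, Finset.card_univ, nsmul_eq_mul]
  rw [hsplit, hdev, inner_zero_left]
  nlinarith [sq_nonneg ‖m - c‖]

lemma sum_norm_sub_smul_sub_mean_sq_le {ι : Type*} [Fintype ι] (x y : ι → E) (γ : ℝ) (a b : E) :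
    ∑ i, ‖x i - γ • y i - (1 / (Fintype.card ι : ℝ)) • ∑ k, (x k - γ • y k)‖ ^ 2
      ≤ ∑ i, (2 * ‖x i - a‖ ^ 2 + 2 * γ ^ 2 * ‖y i - b‖ ^ 2) := by
  refine (sum_norm_sub_mean_sq_le _ (a - γ • b)).trans (Finset.sum_le_sum fun i _ => ?_)
  rw [show x i - γ • y i - (a - γ • b) = (x i - a) - γ • (y i - b) by rw [smul_sub]; abel]
  refine (norm_sub_sq_le_two_mul _ _).trans_eq ?_
  rw [norm_smul, mul_pow, Real.norm_eq_abs, sq_abs]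
  ring

end InnerProduct

section Moments

variable {Ω E : Type*} [MeasurableSpace Ω] {μ : Measure Ω} [NormedAddCommGroup E]

lemma MeasureTheory.MemLp.integrable_norm_sub_sq [IsFiniteMeasure μ] {X : Ω → E}
    (hX : MemLp X 2 μ) (c : E) :
    Integrable (fun ω => ‖X ω - c‖ ^ 2) μ :=
  (hX.sub (memLp_const c)).integrable_norm_pow two_ne_zero

variable [InnerProductSpace ℝ E]

lemma integral_sum_norm_sub_smul_sub_mean_sq_le [IsProbabilityMeasure μ] {ι : Type*} [Fintype ι]
    (x : ι → E) {Y : ι → Ω → E} (hY : ∀ i, MemLp (Y i) 2 μ) (γ : ℝ) (a b : E) :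
    ∫ ω, ∑ i, ‖x i - γ • Y i ω - (1 / (Fintype.card ι : ℝ)) • ∑ k, (x k - γ • Y k ω)‖ ^ 2 ∂μ
      ≤ ∑ i, (2 * ‖x i - a‖ ^ 2 + 2 * γ ^ 2 * ∫ ω, ‖Y i ω - b‖ ^ 2 ∂μ) := by
  have hint : ∀ i, Integrable (fun ω => 2 * ‖x i - a‖ ^ 2 + 2 * γ ^ 2 * ‖Y i ω - b‖ ^ 2) μ :=
    fun i => (integrable_const _).add (((hY i).integrable_norm_sub_sq b).const_mul _)
  calc _ ≤ ∫ ω, ∑ i, (2 * ‖x i - a‖ ^ 2 + 2 * γ ^ 2 * ‖Y i ω - b‖ ^ 2) ∂μ :=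
        integral_mono_of_nonneg (.of_forall fun ω => by positivity)
          (integrable_finsetSum _ fun i _ => hint i)
          (.of_forall fun ω => sum_norm_sub_smul_sub_mean_sq_le x (Y · ω) γ a b)
    _ = _ := by
        rw [integral_finsetSum _ fun i _ => hint i]
        refine Finset.sum_congr rfl fun i _ => ?_
        rw [integral_add (integrable_const _) (((hY i).integrable_norm_sub_sq b).const_mul _),
          integral_const, integral_const_mul, probReal_univ, one_smul]

variable [CompleteSpace E]

lemma integral_norm_sub_sq_eq [IsProbabilityMeasure μ] {X : Ω → E} (hX : MemLp X 2 μ) (c : E) :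
    ∫ ω, ‖X ω - c‖ ^ 2 ∂μ = ∫ ω, ‖X ω - μ[X]‖ ^ 2 ∂μ + ‖μ[X] - c‖ ^ 2 := by
  have hcentered : Integrable (fun ω => X ω - μ[X]) μ :=
    (hX.integrable one_le_two).sub (integrable_const _)
  have hcross : ∫ ω, ⟪μ[X] - c, X ω - μ[X]⟫ ∂μ = 0 := by
    rw [integral_inner hcentered, integral_sub (hX.integrable one_le_two) (integrable_const _),
      integral_const, probReal_univ, one_smul, sub_self, inner_zero_right]
  have hsplit : ∀ ω, ‖X ω - c‖ ^ 2
      = (‖X ω - μ[X]‖ ^ 2 + ‖μ[X] - c‖ ^ 2) + 2 * ⟪μ[X] - c, X ω - μ[X]⟫ := fun ω => by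
    rw [← sub_add_sub_cancel (X ω) μ[X] c, norm_add_sq_real, real_inner_comm]
    ring
  have hsq : Integrable (fun ω => ‖X ω - μ[X]‖ ^ 2 + ‖μ[X] - c‖ ^ 2) μ :=
    (hX.integrable_norm_sub_sq _).add (integrable_const _)
  simp_rw [hsplit]
  rw [integral_add hsq ((hcentered.const_inner _).const_mul 2), integral_const_mul, hcross,
    integral_add (hX.integrable_norm_sub_sq _) (integrable_const _), integral_const,
    probReal_univ, one_smul, mul_zero, add_zero]

lemma integral_norm_sub_sq_le [IsProbabilityMeasure μ] {X : Ω → E} (hX : MemLp X 2 μ) (b c : E) :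
    ∫ ω, ‖X ω - c‖ ^ 2 ∂μ ≤ ∫ ω, ‖X ω - μ[X]‖ ^ 2 ∂μ + 2 * (‖μ[X] - b‖ ^ 2 + ‖b - c‖ ^ 2) := by
  rw [integral_norm_sub_sq_eq hX, ← sub_add_sub_cancel μ[X] b c]
  gcongr
  exact norm_add_sq_le_two_mul _ _

end Moments

theorem statement4_general {Ω : Type*} [MeasurableSpace Ω] {μ : Measure Ω} [IsProbabilityMeasure μ]
    {n d : ℕ} (L σ ζ γ : ℝ)
    (f : Fin n → EuclideanSpace ℝ (Fin d) → ℝ)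
    (hlip : ∀ i x y, ‖gradient (f i) x - gradient (f i) y‖ ≤ L * ‖x - y‖)
    (F : EuclideanSpace ℝ (Fin d) → ℝ)
    (x : Fin n → EuclideanSpace ℝ (Fin d))
    (xbar : EuclideanSpace ℝ (Fin d))
    (hζbound : (1 / (n : ℝ)) * ∑ i, ‖gradient (f i) xbar - gradient F xbar‖ ^ 2 ≤ ζ ^ 2)
    (g : Fin n → Ω → EuclideanSpace ℝ (Fin d))
    (hL2 : ∀ i, MemLp (g i) 2 μ)
    (hmean : ∀ i, (∫ ω, g i ω ∂μ) = gradient (f i) (x i))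
    (hvar : ∀ i, (∫ ω, ‖g i ω - gradient (f i) (x i)‖ ^ 2 ∂μ) ≤ σ ^ 2)
    (v : Fin n → Ω → EuclideanSpace ℝ (Fin d))
    (hv : ∀ i ω, v i ω = x i - γ • g i ω) :
    (∫ ω, ∑ i, ‖v i ω - (1 / (n : ℝ)) • ∑ k, v k ω‖ ^ 2 ∂μ) ≤
      (2 + 12 * L ^ 2 * γ ^ 2) * ∑ i, ‖x i - xbar‖ ^ 2 +
        6 * n * γ ^ 2 * ζ ^ 2 + 2 * n * γ ^ 2 * σ ^ 2 := by
  set G := gradient F xbar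
  set S := ∑ i, ‖x i - xbar‖ ^ 2
  set T := ∑ i, ‖gradient (f i) xbar - G‖ ^ 2
  have hT : T ≤ n * ζ ^ 2 := by
    rcases n.eq_zero_or_pos with rfl | hn
    · simp [T]
    rw [one_div_mul_eq_div, div_le_iff₀ (by positivity)] at hζbound
    linarith
  have hmoment : ∀ i, ∫ ω, ‖g i ω - G‖ ^ 2 ∂μ
      ≤ σ ^ 2 + 2 * (L ^ 2 * ‖x i - xbar‖ ^ 2 + ‖gradient (f i) xbar - G‖ ^ 2) := fun i => by
    refine (integral_norm_sub_sq_le (hL2 i) (gradient (f i) xbar) G).trans ?_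
    rw [hmean i, ← mul_pow]
    gcongr
    exacts [hvar i, hlip i (x i) xbar]
  calc (∫ ω, ∑ i, ‖v i ω - (1 / (n : ℝ)) • ∑ k, v k ω‖ ^ 2 ∂μ)
      ≤ ∑ i, (2 * ‖x i - xbar‖ ^ 2 + 2 * γ ^ 2 * ∫ ω, ‖g i ω - G‖ ^ 2 ∂μ) := by
        simpa only [hv, Fintype.card_fin] using
          integral_sum_norm_sub_smul_sub_mean_sq_le x hL2 γ xbar G
    _ ≤ ∑ i, (2 * ‖x i - xbar‖ ^ 2 + 2 * γ ^ 2 *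
          (σ ^ 2 + 2 * (L ^ 2 * ‖x i - xbar‖ ^ 2 + ‖gradient (f i) xbar - G‖ ^ 2))) := by
        gcongr with i
        exact hmoment i
    _ = (2 + 4 * L ^ 2 * γ ^ 2) * S + 4 * γ ^ 2 * T + 2 * n * γ ^ 2 * σ ^ 2 := by
        simp only [S, T, mul_add, Finset.sum_add_distrib, ← Finset.mul_sum, Finset.sum_const,
          Finset.card_univ, Fintype.card_fin, nsmul_eq_mul]
        ring
    _ ≤ (2 + 12 * L ^ 2 * γ ^ 2) * S + 6 * n * γ ^ 2 * ζ ^ 2 + 2 * n * γ ^ 2 * σ ^ 2 := by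
        have hS : 0 ≤ S := by positivity
        nlinarith [mul_le_mul_of_nonneg_left hT (sq_nonneg γ), mul_nonneg (sq_nonneg (L * γ)) hS,
          mul_nonneg (Nat.cast_nonneg n) (sq_nonneg (γ * ζ))]

/-- Let `f 1, …, f n : ℝ^d → ℝ` be differentiable with `L`-Lipschitz
gradients, `F = (1/n)∑ i, f i`.  Fix points `x i` with mean `x̄`, assume
`(1/n)∑ i ‖∇f_i(x̄) − ∇F(x̄)‖² ≤ ζ²`.  Let `g i` be independent random vectors with
`E[g i] = ∇f_i(x i)` and `E‖g i − ∇f_i(x i)‖² ≤ σ²`.  Set `v i = x i − γ·g i` with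
mean `v̄`.  Then `E[∑ i ‖v i − v̄‖²] ≤ (2 + 12L²γ²)·∑ i ‖x i − x̄‖² + 6nγ²ζ² + 2nγ²σ²`. -/
theorem statement4 {Ω : Type*} [MeasurableSpace Ω] {μ : Measure Ω} [IsProbabilityMeasure μ]
    {n d : ℕ} (hn : 1 ≤ n) (L σ ζ γ : ℝ)
    (hL : 0 ≤ L) (hσ : 0 ≤ σ) (hζ : 0 ≤ ζ) (hγ : 0 ≤ γ)
    (f : Fin n → EuclideanSpace ℝ (Fin d) → ℝ)
    (hdiff : ∀ i, Differentiable ℝ (f i))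
    (hlip : ∀ i x y, ‖gradient (f i) x - gradient (f i) y‖ ≤ L * ‖x - y‖)
    (F : EuclideanSpace ℝ (Fin d) → ℝ)
    (hF : F = fun x => (1 / (n : ℝ)) * ∑ i, f i x)
    (x : Fin n → EuclideanSpace ℝ (Fin d))
    (xbar : EuclideanSpace ℝ (Fin d))
    (hxbar : xbar = (1 / (n : ℝ)) • ∑ i, x i)
    (hζbound : (1 / (n : ℝ)) * ∑ i, ‖gradient (f i) xbar - gradient F xbar‖ ^ 2 ≤ ζ ^ 2)
    (g : Fin n → Ω → EuclideanSpace ℝ (Fin d))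
    (hmeas : ∀ i, Measurable (g i))
    (hL2 : ∀ i, MemLp (g i) 2 μ)
    (hindep : iIndepFun g μ)
    (hmean : ∀ i, (∫ ω, g i ω ∂μ) = gradient (f i) (x i))
    (hvar : ∀ i, (∫ ω, ‖g i ω - gradient (f i) (x i)‖ ^ 2 ∂μ) ≤ σ ^ 2)
    (v : Fin n → Ω → EuclideanSpace ℝ (Fin d))
    (hv : ∀ i ω, v i ω = x i - γ • g i ω) :
    (∫ ω, ∑ i, ‖v i ω - (1 / (n : ℝ)) • ∑ k, v k ω‖ ^ 2 ∂μ) ≤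
      (2 + 12 * L ^ 2 * γ ^ 2) * ∑ i, ‖x i - xbar‖ ^ 2 +
        6 * n * γ ^ 2 * ζ ^ 2 + 2 * n * γ ^ 2 * σ ^ 2 :=
  statement4_general L σ ζ γ f hlip F x xbar hζbound g hL2 hmean hvar v hv
end

section
/- Let W_s, W_{s+1}, …, W_t be independent random n×n real matrices, each satisfying E[W·Wᵀ] = α₁·I_n + (1−α₁)·A_n and E[W·A_n·Wᵀ] = α₂·I_n + (1−α₂)·A_n, where 0 < α₂ < α₁ < 1. Then for any fixed d×n real matrix G, E‖ G·W_s·W_{s+1}⋯W_t·(I_n − A_n) ‖_F² = (α₁ − α₂)^{t−s+1}·‖ G·(I_n − A_n) ‖_F². In particular, for each such W, E[ W·(I_n − A_n)·Wᵀ ] = (α₁ − α₂)·(I_n − A_n). -/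
open MeasureTheory ProbabilityTheory Matrix

/-- The squared Frobenius norm `‖M‖_F² = ∑_{a,b} M a b ^ 2`. -/
noncomputable def frobSq {m k : ℕ} (M : Matrix (Fin m) (Fin k) ℝ) : ℝ := ∑ a, ∑ b, M a b ^ 2

/-- The ordered matrix product `W s ω * W (s+1) ω * ⋯ * W t ω`. -/
noncomputable def matProd {Ω : Type*} {n : ℕ} (W : ℕ → Ω → Matrix (Fin n) (Fin n) ℝ)
    (s t : ℕ) (ω : Ω) : Matrix (Fin n) (Fin n) ℝ :=
  ((List.range (t + 1 - s)).map fun k => W (s + k) ω).prod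

/-!
Write `P = I - A_n`, a symmetric idempotent, so that `‖G M P‖_F² = tr (G (M P Mᵀ) Gᵀ)` and
everything reduces to the matrix `E[M P Mᵀ]` for `M = W_s ⋯ W_t`. For one factor,
`E[W P Wᵀ] = E[W Wᵀ] - E[W A_n Wᵀ] = (α₁ - α₂) P`. Splitting off the last factor, `M = M' W`
with `M'` independent of `W`, and entrywise factorisation of expectations gives
`E[M' (W P Wᵀ) M'ᵀ] = E[M' E[W P Wᵀ] M'ᵀ] = (α₁ - α₂) E[M' P M'ᵀ]`; induction on the number of
factors finishes. Independence also keeps the entries of the partial products square integrable,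
which is what makes all these expectations finite.
-/

-- `matrixMeasurableSpace` is the product σ-algebra of `m → n → ℝ`, so these instances transfer
-- from there; they let `fun_prop` prove measurability of matrix expressions.
instance Matrix.borelSpace {m n : Type*} [Fintype m] [Fintype n] :
    BorelSpace (Matrix m n ℝ) :=
  inferInstanceAs (BorelSpace (m → n → ℝ))

instance Matrix.secondCountableTopology {m n : Type*} [Fintype m] [Fintype n] :
    SecondCountableTopology (Matrix m n ℝ) :=
  inferInstanceAs (SecondCountableTopology (m → n → ℝ))

section Algebra

theorem Matrix.mul_mul_transpose_apply {m n α : Type*} [Fintype n] [CommSemiring α]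
    (M : Matrix m n α) (R : Matrix n n α) (x y : m) :
    (M * R * Mᵀ) x y = ∑ u, ∑ v, M x u * M y v * R u v := by
  simp only [mul_apply, transpose_apply, Finset.sum_mul]
  rw [Finset.sum_comm]
  exact Finset.sum_congr rfl fun _ _ => Finset.sum_congr rfl fun _ _ => by ring

theorem frobSq_eq_trace {m k : ℕ} (M : Matrix (Fin m) (Fin k) ℝ) :
    frobSq M = trace (M * Mᵀ) := by
  simp [frobSq, trace, mul_apply, sq]

theorem frobSq_mul_eq_trace {m k : ℕ} (A : Matrix (Fin m) (Fin k) ℝ)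
    {P : Matrix (Fin k) (Fin k) ℝ} (hP : P * Pᵀ = P) :
    frobSq (A * P) = trace (A * P * Aᵀ) := by
  rw [frobSq_eq_trace, transpose_mul, Matrix.mul_assoc, ← Matrix.mul_assoc P, hP,
    Matrix.mul_assoc]

theorem stdA_transpose (n : ℕ) : (stdA n)ᵀ = stdA n := rfl

theorem stdA_mul_self (n : ℕ) : stdA n * stdA n = stdA n := by
  ext i j
  have : (n : ℝ) ≠ 0 := Nat.cast_ne_zero.2 (Fin.pos i).ne'
  simp [stdA, mul_apply]
  field_simp

theorem one_sub_stdA_mul_transpose (n : ℕ) :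
    (1 - stdA n) * (1 - stdA n)ᵀ = 1 - stdA n := by
  rw [transpose_sub, transpose_one, stdA_transpose, sub_mul, mul_sub, mul_sub, stdA_mul_self]
  simp

end Algebra

section Integral

variable {Ω : Type*} [MeasurableSpace Ω] {μ : Measure Ω} {m n : Type*}

theorem integral_sum_sum {ι κ : Type*} [Fintype ι] [Fintype κ] {f : ι → κ → Ω → ℝ}
    (hf : ∀ i j, Integrable (f i j) μ) :
    ∫ ω, ∑ i, ∑ j, f i j ω ∂μ = ∑ i, ∑ j, ∫ ω, f i j ω ∂μ := by
  rw [integral_finsetSum _ fun i _ => integrable_finsetSum _ fun j _ => hf i j]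
  exact Finset.sum_congr rfl fun i _ => integral_finsetSum _ fun j _ => hf i j

-- Entrywise Bochner integral: `Matrix` carries no global norm, and the moment hypotheses of the
-- theorem are written in this form.
noncomputable def matrixIntegral (μ : Measure Ω) (f : Ω → Matrix m n ℝ) : Matrix m n ℝ :=
  Matrix.of fun a b => ∫ ω, f ω a b ∂μ

theorem matrixIntegral_sub {f g : Ω → Matrix m n ℝ} (hf : ∀ a b, Integrable (f · a b) μ)
    (hg : ∀ a b, Integrable (g · a b) μ) :
    matrixIntegral μ (fun ω => f ω - g ω) = matrixIntegral μ f - matrixIntegral μ g := by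
  ext a b
  exact integral_sub (hf a b) (hg a b)

theorem matrixIntegral_smul (c : ℝ) (f : Ω → Matrix m n ℝ) :
    matrixIntegral μ (fun ω => c • f ω) = c • matrixIntegral μ f := by
  ext a b
  exact integral_const_mul c _

theorem integrable_mul_mul_transpose_apply [Fintype n] {M : Ω → Matrix m n ℝ}
    (hM : ∀ a b, MemLp (M · a b) 2 μ) (R : Matrix n n ℝ) (x y : m) :
    Integrable (fun ω => (M ω * R * (M ω)ᵀ) x y) μ := by
  simp_rw [mul_mul_transpose_apply]
  exact integrable_finsetSum _ fun u _ => integrable_finsetSum _ fun v _ =>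
    ((hM x u).integrable_mul (hM y v)).mul_const _

theorem integral_trace_mul_mul_transpose [Fintype m] [Fintype n] {X : Ω → Matrix n n ℝ}
    (hX : ∀ a b, Integrable (X · a b) μ) (G : Matrix m n ℝ) :
    ∫ ω, trace (G * X ω * Gᵀ) ∂μ = trace (G * matrixIntegral μ X * Gᵀ) := by
  have hGXG : ∀ a u v, Integrable (fun ω => G a u * G a v * X ω u v) μ :=
    fun a u v => (hX u v).const_mul _
  simp_rw [trace, diag, mul_mul_transpose_apply]
  rw [integral_finsetSum _ fun a _ => integrable_finsetSum _ fun u _ =>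
    integrable_finsetSum _ fun v _ => hGXG a u v]
  refine Finset.sum_congr rfl fun a _ => ?_
  rw [integral_sum_sum (hGXG a)]
  simp only [integral_const_mul, matrixIntegral, of_apply]

theorem matrixIntegral_mul_mul_transpose_of_indepFun [Fintype n] {M : Ω → Matrix m n ℝ}
    {R : Ω → Matrix n n ℝ} (hMR : IndepFun M R μ) (hM : ∀ a b, MemLp (M · a b) 2 μ)
    (hR : ∀ a b, Integrable (R · a b) μ) :
    matrixIntegral μ (fun ω => M ω * R ω * (M ω)ᵀ) =
      matrixIntegral μ (fun ω => M ω * matrixIntegral μ R * (M ω)ᵀ) := by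
  ext x y
  have hMM : ∀ u v, Integrable (fun ω => M ω x u * M ω y v) μ :=
    fun u v => (hM x u).integrable_mul (hM y v)
  have hindep : ∀ u v, IndepFun (fun ω => M ω x u * M ω y v) (fun ω => R ω u v) μ :=
    fun u v => hMR.comp (φ := fun A : Matrix m n ℝ => A x u * A y v)
      (ψ := fun B : Matrix n n ℝ => B u v)
      (by fun_prop) (by fun_prop)
  have hMMR : ∀ u v, Integrable (fun ω => M ω x u * M ω y v * R ω u v) μ :=
    fun u v => (hindep u v).integrable_mul (hMM u v) (hR u v)
  simp only [matrixIntegral, of_apply, mul_mul_transpose_apply]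
  rw [integral_sum_sum hMMR, integral_sum_sum fun u v => (hMM u v).mul_const _]
  refine Finset.sum_congr rfl fun u _ => Finset.sum_congr rfl fun v _ => ?_
  rw [integral_mul_const]
  exact (hindep u v).integral_fun_mul_eq_mul_integral (hMM u v).1 (hR u v).1

theorem ProbabilityTheory.IndepFun.memLp_two_mul {X Y : Ω → ℝ} (hXY : IndepFun X Y μ)
    (hX : MemLp X 2 μ) (hY : MemLp Y 2 μ) : MemLp (fun ω => X ω * Y ω) 2 μ := by
  refine (memLp_two_iff_integrable_sq (hX.1.mul hY.1)).2 ?_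
  simp_rw [Pi.mul_apply, mul_pow]
  exact (hXY.comp (measurable_id.pow_const 2) (measurable_id.pow_const 2)).integrable_mul
    hX.integrable_sq hY.integrable_sq

theorem ProbabilityTheory.IndepFun.memLp_two_mul_apply {l : Type*} [Fintype m]
    {M : Ω → Matrix l m ℝ} {V : Ω → Matrix m n ℝ} (hMV : IndepFun M V μ)
    (hM : ∀ a b, MemLp (M · a b) 2 μ) (hV : ∀ a b, MemLp (V · a b) 2 μ) (a : l) (b : n) :
    MemLp (fun ω => (M ω * V ω) a b) 2 μ := by
  simp only [mul_apply]
  exact memLp_finsetSum _ fun u _ =>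
    (hMV.comp (φ := fun A : Matrix l m ℝ => A a u)
      (ψ := fun B : Matrix m n ℝ => B u b) (by fun_prop)
      (by fun_prop)).memLp_two_mul (hM a u) (hV u b)

end Integral

section MatProd

variable {Ω : Type*} {n : ℕ}

theorem matProd_self (W : ℕ → Ω → Matrix (Fin n) (Fin n) ℝ) (s : ℕ) (ω : Ω) :
    matProd W s s ω = W s ω := by
  simp [matProd]

theorem matProd_succ (W : ℕ → Ω → Matrix (Fin n) (Fin n) ℝ) {s u : ℕ} (hsu : s ≤ u) (ω : Ω) :
    matProd W s (u + 1) ω = matProd W s u ω * W (u + 1) ω := by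
  rw [matProd, matProd, show u + 1 + 1 - s = u + 1 - s + 1 by omega, List.range_succ,
    List.map_append, List.prod_append]
  simp [show s + (u + 1 - s) = u + 1 by omega]

end MatProd

section RandomProducts

variable {Ω : Type*} [MeasurableSpace Ω] {μ : Measure Ω} {n : ℕ}

theorem matrixIntegral_mul_one_sub_stdA_mul_transpose {V : Ω → Matrix (Fin n) (Fin n) ℝ}
    (hV : ∀ a b, MemLp (V · a b) 2 μ) {α₁ α₂ : ℝ}
    (hV₁ : matrixIntegral μ (fun ω => V ω * (V ω)ᵀ) = α₁ • 1 + (1 - α₁) • stdA n)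
    (hV₂ : matrixIntegral μ (fun ω => V ω * stdA n * (V ω)ᵀ) = α₂ • 1 + (1 - α₂) • stdA n) :
    matrixIntegral μ (fun ω => V ω * (1 - stdA n) * (V ω)ᵀ) = (α₁ - α₂) • (1 - stdA n) := by
  simp_rw [Matrix.mul_sub, Matrix.sub_mul, Matrix.mul_one]
  rw [matrixIntegral_sub (by simpa using integrable_mul_mul_transpose_apply hV 1)
    (integrable_mul_mul_transpose_apply hV _), hV₁, hV₂]
  module

theorem ProbabilityTheory.iIndepFun.indepFun_matProd {W : ℕ → Ω → Matrix (Fin n) (Fin n) ℝ}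
    (hW : ∀ r, Measurable (W r)) {s t u : ℕ} (hindep : iIndepFun (fun r : Set.Icc s t => W r) μ)
    (hsu : s ≤ u) (hut : u < t) : IndepFun (matProd W s u) (W (u + 1)) μ := by
  let past : Set (Set.Icc s t) := {r | (r : ℕ) ≤ u}
  let next : Set.Icc s t := ⟨u + 1, by omega, hut⟩
  have hsplit := indep_iSup_of_disjoint (fun r : Set.Icc s t => (hW r).comap_le) hindep.iIndep
    (S := past) (T := {next}) (by simp [past, next])
  rw [IndepFun_iff_Indep]
  -- the past `W s, …, W u` generates a σ-algebra for which `matProd W s u` is measurable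
  refine indep_of_indep_of_le_right (indep_of_indep_of_le_left hsplit ?_) ?_
  · have hprod : matProd W s u = fun ω =>
        (((List.range (u + 1 - s)).map fun k => W (s + k)).map fun f => f ω).prod := by
      funext ω
      simp [matProd, Function.comp_def]
    rw [← measurable_iff_comap_le, hprod]
    refine List.measurable_fun_prod _ fun f hf => ?_
    obtain ⟨k, hk, rfl⟩ := List.mem_map.1 hf
    have hk : k < u + 1 - s := List.mem_range.1 hk
    exact measurable_iff_comap_le.2 <|
      le_iSup₂_of_le (f := fun (r : Set.Icc s t) _ => MeasurableSpace.comap (W r) _)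
        ⟨s + k, by omega, by omega⟩ (show s + k ≤ u by omega) le_rfl
  · exact le_iSup₂_of_le next rfl le_rfl

theorem memLp_matProd_apply {W : ℕ → Ω → Matrix (Fin n) (Fin n) ℝ} (hW : ∀ r, Measurable (W r))
    (hWL2 : ∀ r a b, MemLp (W r · a b) 2 μ) {s t : ℕ}
    (hindep : iIndepFun (fun r : Set.Icc s t => W r) μ) {u : ℕ} (hsu : s ≤ u) (hut : u ≤ t) :
    ∀ a b, MemLp (matProd W s u · a b) 2 μ := by
  induction u, hsu using Nat.le_induction with
  | base => simpa only [matProd_self] using hWL2 s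
  | succ u hsu ih =>
    simp_rw [matProd_succ W hsu]
    exact (hindep.indepFun_matProd hW hsu (by omega)).memLp_two_mul_apply (ih (by omega))
      (hWL2 (u + 1))

theorem matrixIntegral_matProd_mul_mul_transpose {W : ℕ → Ω → Matrix (Fin n) (Fin n) ℝ}
    (hW : ∀ r, Measurable (W r)) (hWL2 : ∀ r a b, MemLp (W r · a b) 2 μ) {s t : ℕ}
    (hindep : iIndepFun (fun r : Set.Icc s t => W r) μ) {P : Matrix (Fin n) (Fin n) ℝ} {β : ℝ}
    (hP : ∀ r ∈ Set.Icc s t, matrixIntegral μ (fun ω => W r ω * P * (W r ω)ᵀ) = β • P)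
    {u : ℕ} (hsu : s ≤ u) (hut : u ≤ t) :
    matrixIntegral μ (fun ω => matProd W s u ω * P * (matProd W s u ω)ᵀ) = β ^ (u - s + 1) • P := by
  induction u, hsu using Nat.le_induction with
  | base => simpa only [matProd_self, Nat.sub_self, zero_add, pow_one] using hP s ⟨le_rfl, hut⟩
  | succ u hsu ih =>
    have hlast : IndepFun (matProd W s u) (fun ω => W (u + 1) ω * P * (W (u + 1) ω)ᵀ) μ :=
      (hindep.indepFun_matProd hW hsu (by omega)).comp measurable_id
        (ψ := fun B : Matrix (Fin n) (Fin n) ℝ => B * P * Bᵀ) (by fun_prop)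
    calc matrixIntegral μ (fun ω => matProd W s (u + 1) ω * P * (matProd W s (u + 1) ω)ᵀ)
        = matrixIntegral μ (fun ω =>
            matProd W s u ω * (W (u + 1) ω * P * (W (u + 1) ω)ᵀ) * (matProd W s u ω)ᵀ) := by
          simp only [matProd_succ W hsu, transpose_mul, Matrix.mul_assoc]
      _ = matrixIntegral μ (fun ω => matProd W s u ω * (β • P) * (matProd W s u ω)ᵀ) := by
          rw [matrixIntegral_mul_mul_transpose_of_indepFun hlast
            (memLp_matProd_apply hW hWL2 hindep hsu (by omega))
            (integrable_mul_mul_transpose_apply (hWL2 (u + 1)) P), hP (u + 1) ⟨by omega, hut⟩]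
      _ = β ^ (u + 1 - s + 1) • P := by
          simp_rw [Matrix.mul_smul, Matrix.smul_mul]
          rw [matrixIntegral_smul, ih (by omega), smul_smul, ← pow_succ',
            show u + 1 - s + 1 = u - s + 1 + 1 by omega]

end RandomProducts

theorem statement5_general {Ω : Type*} [MeasurableSpace Ω] {μ : Measure Ω}
    {n d : ℕ} (s t : ℕ) (hst : s ≤ t) (α₁ α₂ : ℝ)
    (W : ℕ → Ω → Matrix (Fin n) (Fin n) ℝ)
    (hWmeas : ∀ r, Measurable (W r))
    (hWL2 : ∀ r a b, MemLp (fun ω => W r ω a b) 2 μ)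
    (hindep : iIndepFun (fun r : Set.Icc s t => W r) μ)
    (hW1 : ∀ r ∈ Set.Icc s t,
        (Matrix.of fun a b => ∫ ω, (W r ω * (W r ω)ᵀ) a b ∂μ) =
          α₁ • (1 : Matrix (Fin n) (Fin n) ℝ) + (1 - α₁) • stdA n)
    (hW2 : ∀ r ∈ Set.Icc s t,
        (Matrix.of fun a b => ∫ ω, (W r ω * stdA n * (W r ω)ᵀ) a b ∂μ) =
          α₂ • (1 : Matrix (Fin n) (Fin n) ℝ) + (1 - α₂) • stdA n)
    (G : Matrix (Fin d) (Fin n) ℝ) :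
    (∫ ω, frobSq (G * matProd W s t ω * ((1 : Matrix (Fin n) (Fin n) ℝ) - stdA n)) ∂μ) =
        (α₁ - α₂) ^ (t - s + 1) * frobSq (G * ((1 : Matrix (Fin n) (Fin n) ℝ) - stdA n)) ∧
      ∀ r ∈ Set.Icc s t,
        (Matrix.of fun a b =>
            ∫ ω, (W r ω * ((1 : Matrix (Fin n) (Fin n) ℝ) - stdA n) * (W r ω)ᵀ) a b ∂μ) =
          (α₁ - α₂) • ((1 : Matrix (Fin n) (Fin n) ℝ) - stdA n) := by
  set P : Matrix (Fin n) (Fin n) ℝ := 1 - stdA n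
  have hstep : ∀ r ∈ Set.Icc s t,
      matrixIntegral μ (fun ω => W r ω * P * (W r ω)ᵀ) = (α₁ - α₂) • P :=
    fun r hr => matrixIntegral_mul_one_sub_stdA_mul_transpose (hWL2 r) (hW1 r hr) (hW2 r hr)
  refine ⟨?_, hstep⟩
  have hP : P * Pᵀ = P := one_sub_stdA_mul_transpose n
  calc ∫ ω, frobSq (G * matProd W s t ω * P) ∂μ
      = ∫ ω, trace (G * (matProd W s t ω * P * (matProd W s t ω)ᵀ) * Gᵀ) ∂μ := by
        congr 1 with ω
        rw [frobSq_mul_eq_trace _ hP, transpose_mul]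
        simp only [Matrix.mul_assoc]
    _ = trace (G * ((α₁ - α₂) ^ (t - s + 1) • P) * Gᵀ) := by
        rw [integral_trace_mul_mul_transpose (integrable_mul_mul_transpose_apply
            (memLp_matProd_apply hWmeas hWL2 hindep hst le_rfl) P),
          matrixIntegral_matProd_mul_mul_transpose hWmeas hWL2 hindep hstep hst le_rfl]
    _ = (α₁ - α₂) ^ (t - s + 1) * frobSq (G * P) := by
        rw [frobSq_mul_eq_trace G hP, Matrix.mul_smul, Matrix.smul_mul, trace_smul, smul_eq_mul]

/-- Let `W s, …, W t` be independent random `n × n` matrices, each with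
`E[W·Wᵀ] = α₁I + (1−α₁)A_n` and `E[W·A_n·Wᵀ] = α₂I + (1−α₂)A_n`, `0 < α₂ < α₁ < 1`.
Then for any fixed `d × n` matrix `G`,
`E‖G·W_s⋯W_t·(I−A_n)‖_F² = (α₁−α₂)^{t−s+1}·‖G·(I−A_n)‖_F²`;
in particular `E[W·(I−A_n)·Wᵀ] = (α₁−α₂)·(I−A_n)` for each such `W`. -/
theorem statement5 {Ω : Type*} [MeasurableSpace Ω] {μ : Measure Ω} [IsProbabilityMeasure μ]
    {n d : ℕ} (hn : 1 ≤ n) (s t : ℕ) (hst : s ≤ t) (α₁ α₂ : ℝ)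
    (hα₂ : 0 < α₂) (hα₁₂ : α₂ < α₁) (hα₁ : α₁ < 1)
    (W : ℕ → Ω → Matrix (Fin n) (Fin n) ℝ)
    (hWmeas : ∀ r, Measurable (W r))
    (hWL2 : ∀ r a b, MemLp (fun ω => W r ω a b) 2 μ)
    (hindep : iIndepFun (fun r : Set.Icc s t => W r) μ)
    (hW1 : ∀ r ∈ Set.Icc s t,
        (Matrix.of fun a b => ∫ ω, (W r ω * (W r ω)ᵀ) a b ∂μ) =
          α₁ • (1 : Matrix (Fin n) (Fin n) ℝ) + (1 - α₁) • stdA n)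
    (hW2 : ∀ r ∈ Set.Icc s t,
        (Matrix.of fun a b => ∫ ω, (W r ω * stdA n * (W r ω)ᵀ) a b ∂μ) =
          α₂ • (1 : Matrix (Fin n) (Fin n) ℝ) + (1 - α₂) • stdA n)
    (G : Matrix (Fin d) (Fin n) ℝ) :
    (∫ ω, frobSq (G * matProd W s t ω * ((1 : Matrix (Fin n) (Fin n) ℝ) - stdA n)) ∂μ) =
        (α₁ - α₂) ^ (t - s + 1) * frobSq (G * ((1 : Matrix (Fin n) (Fin n) ℝ) - stdA n)) ∧
      ∀ r ∈ Set.Icc s t,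
        (Matrix.of fun a b =>
            ∫ ω, (W r ω * ((1 : Matrix (Fin n) (Fin n) ℝ) - stdA n) * (W r ω)ᵀ) a b ∂μ) =
          (α₁ - α₂) • ((1 : Matrix (Fin n) (Fin n) ℝ) - stdA n) :=
  statement5_general s t hst α₁ α₂ W hWmeas hWL2 hindep hW1 hW2 G
end

section
/- Let f_1,…,f_n : ℝ^d → ℝ be differentiable with L-Lipschitz gradients and f = (1/n)∑_{i=1}^n f_i. For any points x^{(1)},…,x^{(n)} ∈ ℝ^d with mean x̄ = (1/n)∑_i x^{(i)}, ∑_{i=1}^n ‖ ∇f_i(x^{(i)}) − (1/n)∑_{k=1}^n ∇f_k(x^{(k)}) ‖² ≤ 6L²·∑_{i=1}^n ‖x^{(i)} − x̄‖² + 3·∑_{i=1}^n ‖∇f_i(x̄) − ∇f(x̄)‖². -/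
/-!
Write `gᵢ = ∇fᵢ(x⁽ⁱ⁾)` and `hᵢ = ∇fᵢ(x̄)`, whose average is `∇f(x̄)`. Splitting
`gᵢ - ḡ = (gᵢ - hᵢ) + (hᵢ - h̄) + (h̄ - ḡ)` and using `‖a + b + c‖² ≤ 3(‖a‖² + ‖b‖² + ‖c‖²)`
together with Jensen's bound `n‖h̄ - ḡ‖² ≤ ∑ ‖gᵢ - hᵢ‖²` gives
`∑ ‖gᵢ - ḡ‖² ≤ 6 ∑ ‖gᵢ - hᵢ‖² + 3 ∑ ‖hᵢ - h̄‖²`, and `‖gᵢ - hᵢ‖ ≤ L ‖x⁽ⁱ⁾ - x̄‖` by the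
Lipschitz bound.
-/

open Finset

lemma norm_add₃_sq_le {E : Type*} [SeminormedAddCommGroup E] (a b c : E) :
    ‖a + b + c‖ ^ 2 ≤ 3 * ‖a‖ ^ 2 + 3 * ‖b‖ ^ 2 + 3 * ‖c‖ ^ 2 := by
  have h := norm_add₃_le (a := a) (b := b) (c := c)
  nlinarith [sq_nonneg (‖a‖ - ‖b‖), sq_nonneg (‖b‖ - ‖c‖), sq_nonneg (‖a‖ - ‖c‖),
    norm_nonneg (a + b + c), norm_nonneg a, norm_nonneg b, norm_nonneg c]

section Averages

variable {ι E : Type*} [SeminormedAddCommGroup E] [NormedSpace ℝ E]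

lemma card_mul_norm_average_sq_le (s : Finset ι) (u : ι → E) :
    (#s : ℝ) * ‖(1 / (#s : ℝ)) • ∑ i ∈ s, u i‖ ^ 2 ≤ ∑ i ∈ s, ‖u i‖ ^ 2 := by
  rcases s.eq_empty_or_nonempty with rfl | hs
  · simp
  have hcard : (0 : ℝ) < #s := by exact_mod_cast hs.card_pos
  calc (#s : ℝ) * ‖(1 / (#s : ℝ)) • ∑ i ∈ s, u i‖ ^ 2
      ≤ (#s : ℝ) * ((1 / (#s : ℝ)) * ∑ i ∈ s, ‖u i‖) ^ 2 := by
        rw [norm_smul, Real.norm_of_nonneg (by positivity)]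
        gcongr
        exact norm_sum_le _ _
    _ = (1 / (#s : ℝ)) * (∑ i ∈ s, ‖u i‖) ^ 2 := by field_simp
    _ ≤ (1 / (#s : ℝ)) * ((#s : ℝ) * ∑ i ∈ s, ‖u i‖ ^ 2) := by
        gcongr
        exact sq_sum_le_card_mul_sum_sq
    _ = ∑ i ∈ s, ‖u i‖ ^ 2 := by field_simp

lemma sum_norm_sub_average_sq_le (s : Finset ι) (g h : ι → E) :
    ∑ i ∈ s, ‖g i - (1 / (#s : ℝ)) • ∑ k ∈ s, g k‖ ^ 2 ≤
      6 * ∑ i ∈ s, ‖g i - h i‖ ^ 2 +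
        3 * ∑ i ∈ s, ‖h i - (1 / (#s : ℝ)) • ∑ k ∈ s, h k‖ ^ 2 := by
  set gbar := (1 / (#s : ℝ)) • ∑ k ∈ s, g k
  set hbar := (1 / (#s : ℝ)) • ∑ k ∈ s, h k
  have hjensen : (#s : ℝ) * ‖hbar - gbar‖ ^ 2 ≤ ∑ i ∈ s, ‖g i - h i‖ ^ 2 := by
    have hdiff : gbar - hbar = (1 / (#s : ℝ)) • ∑ i ∈ s, (g i - h i) := by
      rw [sum_sub_distrib, smul_sub]
    rw [norm_sub_rev, hdiff]
    exact card_mul_norm_average_sq_le s _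
  calc ∑ i ∈ s, ‖g i - gbar‖ ^ 2
      = ∑ i ∈ s, ‖(g i - h i) + (h i - hbar) + (hbar - gbar)‖ ^ 2 := by
        simp only [sub_add_sub_cancel]
    _ ≤ ∑ i ∈ s, (3 * ‖g i - h i‖ ^ 2 + 3 * ‖h i - hbar‖ ^ 2 + 3 * ‖hbar - gbar‖ ^ 2) :=
        sum_le_sum fun i _ => norm_add₃_sq_le _ _ _
    _ = 3 * ∑ i ∈ s, ‖g i - h i‖ ^ 2 + 3 * ∑ i ∈ s, ‖h i - hbar‖ ^ 2 +
          3 * ((#s : ℝ) * ‖hbar - gbar‖ ^ 2) := by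
        simp only [sum_add_distrib, ← mul_sum, sum_const, nsmul_eq_mul]
    _ ≤ _ := by linarith

end Averages

lemma gradient_const_mul_sum {ι E : Type*} [NormedAddCommGroup E] [InnerProductSpace ℝ E]
    [CompleteSpace E] (s : Finset ι) {f : ι → E → ℝ} {x : E}
    (hf : ∀ i ∈ s, DifferentiableAt ℝ (f i) x) (c : ℝ) :
    gradient (fun y => c * ∑ i ∈ s, f i y) x = c • ∑ i ∈ s, gradient (f i) x := by
  refine HasGradientAt.gradient ?_
  rw [hasGradientAt_iff_hasFDerivAt, map_smul, map_sum]
  exact (HasFDerivAt.fun_sum fun i hi => (hf i hi).hasGradientAt.hasFDerivAt).const_mul c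

theorem statement6_general {n d : ℕ} (L : ℝ)
    (f : Fin n → EuclideanSpace ℝ (Fin d) → ℝ)
    (hdiff : ∀ i, Differentiable ℝ (f i))
    (hlip : ∀ i x y, ‖gradient (f i) x - gradient (f i) y‖ ≤ L * ‖x - y‖)
    (F : EuclideanSpace ℝ (Fin d) → ℝ)
    (hF : F = fun x => (1 / (n : ℝ)) * ∑ i, f i x)
    (x : Fin n → EuclideanSpace ℝ (Fin d))
    (xbar : EuclideanSpace ℝ (Fin d)) :
    ∑ i, ‖gradient (f i) (x i) - (1 / (n : ℝ)) • ∑ k, gradient (f k) (x k)‖ ^ 2 ≤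
      6 * L ^ 2 * ∑ i, ‖x i - xbar‖ ^ 2 +
        3 * ∑ i, ‖gradient (f i) xbar - gradient F xbar‖ ^ 2 := by
  have hgradF : gradient F xbar = (1 / (n : ℝ)) • ∑ k, gradient (f k) xbar := by
    subst hF
    exact gradient_const_mul_sum _ (fun i _ => hdiff i xbar) _
  have hclose : ∑ i, ‖gradient (f i) (x i) - gradient (f i) xbar‖ ^ 2 ≤
      L ^ 2 * ∑ i, ‖x i - xbar‖ ^ 2 := by
    rw [mul_sum]
    gcongr with i
    rw [← mul_pow]
    exact pow_le_pow_left₀ (norm_nonneg _) (hlip i _ _) 2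
  have hsplit := sum_norm_sub_average_sq_le univ (fun i => gradient (f i) (x i))
    (fun i => gradient (f i) xbar)
  rw [card_univ, Fintype.card_fin, ← hgradF] at hsplit
  linarith

/-- Let `f 1, …, f n : ℝ^d → ℝ` be differentiable with `L`-Lipschitz
gradients and `F = (1/n) ∑ i, f i`.  For any points `x 1, …, x n` with mean `x̄`,
`∑ i ‖∇f_i(x^{(i)}) − (1/n)∑_k ∇f_k(x^{(k)})‖² ≤ 6L²·∑ i ‖x^{(i)} − x̄‖²
  + 3·∑ i ‖∇f_i(x̄) − ∇F(x̄)‖²`. -/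
theorem statement6 {n d : ℕ} (hn : 1 ≤ n) (L : ℝ) (hL : 0 ≤ L)
    (f : Fin n → EuclideanSpace ℝ (Fin d) → ℝ)
    (hdiff : ∀ i, Differentiable ℝ (f i))
    (hlip : ∀ i x y, ‖gradient (f i) x - gradient (f i) y‖ ≤ L * ‖x - y‖)
    (F : EuclideanSpace ℝ (Fin d) → ℝ)
    (hF : F = fun x => (1 / (n : ℝ)) * ∑ i, f i x)
    (x : Fin n → EuclideanSpace ℝ (Fin d))
    (xbar : EuclideanSpace ℝ (Fin d))
    (hxbar : xbar = (1 / (n : ℝ)) • ∑ i, x i) :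
    ∑ i, ‖gradient (f i) (x i) - (1 / (n : ℝ)) • ∑ k, gradient (f k) (x k)‖ ^ 2 ≤
      6 * L ^ 2 * ∑ i, ‖x i - xbar‖ ^ 2 +
        3 * ∑ i, ‖gradient (f i) xbar - gradient F xbar‖ ^ 2 :=
  statement6_general L f hdiff hlip F hF x xbar
end

section
/- Let f_1,…,f_n : ℝ^d → ℝ be differentiable with L-Lipschitz gradients and f = (1/n)∑_{i=1}^n f_i. Fix points x^{(1)},…,x^{(n)} ∈ ℝ^d with mean x̄ = (1/n)∑_i x^{(i)}, and assume (1/n)∑_{i=1}^n ‖∇f_i(x̄) − ∇f(x̄)‖² ≤ ζ². Let g^{(1)},…,g^{(n)} be independent random vectors in ℝ^d with E[g^{(i)}] = ∇f_i(x^{(i)}) and E‖g^{(i)} − ∇f_i(x^{(i)})‖² ≤ σ², and set ḡ = (1/n)∑_{i=1}^n g^{(i)}. Then ∑_{i=1}^n E‖ g^{(i)} − ḡ ‖² ≤ nσ² + 6L²·∑_{i=1}^n ‖x^{(i)} − x̄‖² + 3nζ². -/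
/-!
The mean `ḡ` minimises `v ↦ ∑ i ‖g i - v‖²` pointwise, so `ḡ` may be replaced by the constant
`c = ∇F(x̄)`. Each `E‖g i - c‖²` splits as variance plus squared bias `‖∇f_i(x i) - c‖²`, and the
Lipschitz bound gives `‖∇f_i(x i) - c‖² ≤ 2L²‖x i - x̄‖² + 2‖∇f_i(x̄) - c‖²`. Summing gives
`nσ² + 2L² ∑ i ‖x i - x̄‖² + 2nζ²`.
-/

open MeasureTheory ProbabilityTheory Finset

section

variable {E : Type*} [NormedAddCommGroup E] [InnerProductSpace ℝ E]

theorem sum_norm_sub_sq_eq_sum_norm_sub_mean_sq_add {ι : Type*} [Fintype ι] (a : ι → E) (c : E) :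
    ∑ i, ‖a i - c‖ ^ 2 =
      ∑ i, ‖a i - (1 / (Fintype.card ι : ℝ)) • ∑ k, a k‖ ^ 2 +
        Fintype.card ι * ‖(1 / (Fintype.card ι : ℝ)) • ∑ k, a k - c‖ ^ 2 := by
  set ā := (1 / (Fintype.card ι : ℝ)) • ∑ k, a k
  have hdev : ∑ i, (a i - ā) = 0 := by
    rcases isEmpty_or_nonempty ι with _ | _
    · simp
    · rw [sum_sub_distrib, sum_const, card_univ, ← Nat.cast_smul_eq_nsmul ℝ, smul_smul,
        mul_one_div_cancel (by positivity), one_smul, sub_self]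
  have hsplit (i : ι) :
      ‖a i - c‖ ^ 2 = ‖a i - ā‖ ^ 2 + 2 * inner ℝ (a i - ā) (ā - c) + ‖ā - c‖ ^ 2 := by
    rw [← norm_add_sq_real, sub_add_sub_cancel]
  simp only [hsplit, sum_add_distrib, ← mul_sum, ← sum_inner, hdev, inner_zero_left, mul_zero,
    add_zero, sum_const, card_univ, nsmul_eq_mul]

theorem sum_integral_norm_sub_mean_sq_le {Ω ι : Type*} [MeasurableSpace Ω] {μ : Measure Ω}
    [IsFiniteMeasure μ] [Fintype ι] {X : ι → Ω → E} (hX : ∀ i, MemLp (X i) 2 μ) (c : E) :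
    ∑ i, ∫ ω, ‖X i ω - (1 / (Fintype.card ι : ℝ)) • ∑ k, X k ω‖ ^ 2 ∂μ ≤
      ∑ i, ∫ ω, ‖X i ω - c‖ ^ 2 ∂μ := by
  have hmean : MemLp (fun ω => (1 / (Fintype.card ι : ℝ)) • ∑ k, X k ω) 2 μ :=
    (memLp_finsetSum _ fun k _ => hX k).const_smul _
  have hint_mean (i : ι) :
      Integrable (fun ω => ‖X i ω - (1 / (Fintype.card ι : ℝ)) • ∑ k, X k ω‖ ^ 2) μ :=
    ((hX i).sub hmean).integrable_norm_pow two_ne_zero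
  have hint_c (i : ι) : Integrable (fun ω => ‖X i ω - c‖ ^ 2) μ :=
    ((hX i).sub (memLp_const c)).integrable_norm_pow two_ne_zero
  rw [← integral_finsetSum _ fun i _ => hint_mean i, ← integral_finsetSum _ fun i _ => hint_c i]
  refine integral_mono (integrable_finsetSum _ fun i _ => hint_mean i)
    (integrable_finsetSum _ fun i _ => hint_c i) fun ω => ?_
  rw [sum_norm_sub_sq_eq_sum_norm_sub_mean_sq_add (X · ω) c]
  exact le_add_of_nonneg_right (by positivity)

theorem integral_norm_sub_sq_eq_integral_norm_sub_integral_sq_add [CompleteSpace E] {Ω : Type*}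
    [MeasurableSpace Ω] {μ : Measure Ω} [IsProbabilityMeasure μ] {X : Ω → E} (hX : MemLp X 2 μ)
    (c : E) :
    ∫ ω, ‖X ω - c‖ ^ 2 ∂μ = ∫ ω, ‖X ω - ∫ ω', X ω' ∂μ‖ ^ 2 ∂μ + ‖(∫ ω, X ω ∂μ) - c‖ ^ 2 := by
  set m := ∫ ω, X ω ∂μ
  have hdev : Integrable (fun ω => X ω - m) μ := (hX.integrable one_le_two).sub (integrable_const m)
  have hcross : ∫ ω, inner ℝ (m - c) (X ω - m) ∂μ = 0 := by
    rw [integral_inner hdev, integral_sub (hX.integrable one_le_two) (integrable_const m),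
      integral_const, probReal_univ, one_smul, sub_self, inner_zero_right]
  have hsplit (ω : Ω) :
      ‖X ω - c‖ ^ 2 = ‖X ω - m‖ ^ 2 + 2 * inner ℝ (m - c) (X ω - m) + ‖m - c‖ ^ 2 := by
    rw [real_inner_comm, ← norm_add_sq_real, sub_add_sub_cancel]
  have hsq : Integrable (fun ω => ‖X ω - m‖ ^ 2) μ :=
    (hX.sub (memLp_const m)).integrable_norm_pow two_ne_zero
  have hlin : Integrable (fun ω => 2 * inner ℝ (m - c) (X ω - m)) μ :=
    (hdev.const_inner _).const_mul 2
  simp_rw [hsplit]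
  rw [integral_add (by exact hsq.add hlin) (integrable_const _), integral_add hsq hlin,
    integral_const_mul, hcross, integral_const, probReal_univ, one_smul, mul_zero, add_zero]

end

theorem norm_sub_sq_le_of_norm_sub_le {E : Type*} [SeminormedAddCommGroup E] {a b c : E} {r : ℝ}
    (h : ‖a - b‖ ≤ r) : ‖a - c‖ ^ 2 ≤ 2 * r ^ 2 + 2 * ‖b - c‖ ^ 2 := by
  have htri : ‖a - c‖ ≤ r + ‖b - c‖ :=
    (norm_sub_le_norm_sub_add_norm_sub a b c).trans (by gcongr)
  calc ‖a - c‖ ^ 2 ≤ (r + ‖b - c‖) ^ 2 := by gcongr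
    _ ≤ 2 * (r ^ 2 + ‖b - c‖ ^ 2) := add_sq_le
    _ = 2 * r ^ 2 + 2 * ‖b - c‖ ^ 2 := mul_add _ _ _

theorem statement9_general {Ω : Type*} [MeasurableSpace Ω] {μ : Measure Ω} [IsProbabilityMeasure μ]
    {n d : ℕ} (hn : 1 ≤ n) (L σ ζ : ℝ)
    (f : Fin n → EuclideanSpace ℝ (Fin d) → ℝ)
    (hlip : ∀ i x y, ‖gradient (f i) x - gradient (f i) y‖ ≤ L * ‖x - y‖)
    (F : EuclideanSpace ℝ (Fin d) → ℝ)
    (x : Fin n → EuclideanSpace ℝ (Fin d))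
    (xbar : EuclideanSpace ℝ (Fin d))
    (hζbound : (1 / (n : ℝ)) * ∑ i, ‖gradient (f i) xbar - gradient F xbar‖ ^ 2 ≤ ζ ^ 2)
    (g : Fin n → Ω → EuclideanSpace ℝ (Fin d))
    (hL2 : ∀ i, MemLp (g i) 2 μ)
    (hmean : ∀ i, (∫ ω, g i ω ∂μ) = gradient (f i) (x i))
    (hvar : ∀ i, (∫ ω, ‖g i ω - gradient (f i) (x i)‖ ^ 2 ∂μ) ≤ σ ^ 2) :
    ∑ i, (∫ ω, ‖g i ω - (1 / (n : ℝ)) • ∑ k, g k ω‖ ^ 2 ∂μ) ≤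
      n * σ ^ 2 + 6 * L ^ 2 * ∑ i, ‖x i - xbar‖ ^ 2 + 3 * n * ζ ^ 2 := by
  set c := gradient F xbar
  have hheterogeneity : ∑ i, ‖gradient (f i) xbar - c‖ ^ 2 ≤ n * ζ ^ 2 := by
    rwa [one_div, inv_mul_le_iff₀ (by exact_mod_cast hn)] at hζbound
  have hbias_variance (i : Fin n) : ∫ ω, ‖g i ω - c‖ ^ 2 ∂μ ≤
      σ ^ 2 + (2 * L ^ 2 * ‖x i - xbar‖ ^ 2 + 2 * ‖gradient (f i) xbar - c‖ ^ 2) := by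
    rw [integral_norm_sub_sq_eq_integral_norm_sub_integral_sq_add (hL2 i), hmean i]
    exact add_le_add (hvar i) ((norm_sub_sq_le_of_norm_sub_le (hlip i _ _)).trans_eq (by ring))
  calc ∑ i, (∫ ω, ‖g i ω - (1 / (n : ℝ)) • ∑ k, g k ω‖ ^ 2 ∂μ)
      ≤ ∑ i, ∫ ω, ‖g i ω - c‖ ^ 2 ∂μ := by
        simpa only [Fintype.card_fin] using sum_integral_norm_sub_mean_sq_le hL2 c
    _ ≤ ∑ i, (σ ^ 2 + (2 * L ^ 2 * ‖x i - xbar‖ ^ 2 + 2 * ‖gradient (f i) xbar - c‖ ^ 2)) :=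
        sum_le_sum fun i _ => hbias_variance i
    _ = n * σ ^ 2 + 2 * L ^ 2 * ∑ i, ‖x i - xbar‖ ^ 2 +
          2 * ∑ i, ‖gradient (f i) xbar - c‖ ^ 2 := by
        simp only [sum_add_distrib, ← mul_sum, sum_const, card_univ, Fintype.card_fin,
          nsmul_eq_mul]
        ring
    _ ≤ n * σ ^ 2 + 6 * L ^ 2 * ∑ i, ‖x i - xbar‖ ^ 2 + 3 * n * ζ ^ 2 := by
        have : 0 ≤ L ^ 2 * ∑ i, ‖x i - xbar‖ ^ 2 := by positivity
        have : 0 ≤ n * ζ ^ 2 := by positivity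
        linarith

/-- Let `f 1, …, f n : ℝ^d → ℝ` be differentiable with `L`-Lipschitz
gradients, `F = (1/n)∑ i, f i`.  Fix points `x i` with mean `x̄`, assume
`(1/n)∑ i ‖∇f_i(x̄) − ∇F(x̄)‖² ≤ ζ²`.  Let `g i` be independent random vectors with
`E[g i] = ∇f_i(x i)` and `E‖g i − ∇f_i(x i)‖² ≤ σ²`, and `ḡ = (1/n)∑ i, g i`.
Then `∑ i E‖g i − ḡ‖² ≤ nσ² + 6L²·∑ i ‖x i − x̄‖² + 3nζ²`. -/
theorem statement9 {Ω : Type*} [MeasurableSpace Ω] {μ : Measure Ω} [IsProbabilityMeasure μ]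
    {n d : ℕ} (hn : 1 ≤ n) (L σ ζ : ℝ)
    (hL : 0 ≤ L) (hσ : 0 ≤ σ) (hζ : 0 ≤ ζ)
    (f : Fin n → EuclideanSpace ℝ (Fin d) → ℝ)
    (hdiff : ∀ i, Differentiable ℝ (f i))
    (hlip : ∀ i x y, ‖gradient (f i) x - gradient (f i) y‖ ≤ L * ‖x - y‖)
    (F : EuclideanSpace ℝ (Fin d) → ℝ)
    (hF : F = fun x => (1 / (n : ℝ)) * ∑ i, f i x)
    (x : Fin n → EuclideanSpace ℝ (Fin d))
    (xbar : EuclideanSpace ℝ (Fin d))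
    (hxbar : xbar = (1 / (n : ℝ)) • ∑ i, x i)
    (hζbound : (1 / (n : ℝ)) * ∑ i, ‖gradient (f i) xbar - gradient F xbar‖ ^ 2 ≤ ζ ^ 2)
    (g : Fin n → Ω → EuclideanSpace ℝ (Fin d))
    (hmeas : ∀ i, Measurable (g i))
    (hL2 : ∀ i, MemLp (g i) 2 μ)
    (hindep : iIndepFun g μ)
    (hmean : ∀ i, (∫ ω, g i ω ∂μ) = gradient (f i) (x i))
    (hvar : ∀ i, (∫ ω, ‖g i ω - gradient (f i) (x i)‖ ^ 2 ∂μ) ≤ σ ^ 2) :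
    ∑ i, (∫ ω, ‖g i ω - (1 / (n : ℝ)) • ∑ k, g k ω‖ ^ 2 ∂μ) ≤
      n * σ ^ 2 + 6 * L ^ 2 * ∑ i, ‖x i - xbar‖ ^ 2 + 3 * n * ζ ^ 2 :=
  statement9_general hn L σ ζ f hlip F x xbar hζbound g hL2 hmean hvar
end

section
/- For every integer n ≥ 2 and every real p with 0 ≤ p < 1, ∑_{m=0}^{n-1} (1/(m+1)²)·C(n-1, m)·(1-p)^m·p^{n-1-m} ≤ (1-p)^{n-1}/n² + p^{n-1} + T₁, where T₁ = 2·( 1 − p^{n+1} − (n+1)(1-p)p^n − (n+1)n(1-p)²p^{n-1}/2 − (1-p)^{n+1} ) / ( n(n+1)(1-p)² ). -/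
-- binomial coefficient identity
lemma choose_id (k i : ℕ) :
    (k + 2) * (k + 3) * Nat.choose (k + 1) (i + 1)
      = (i + 2) * (i + 3) * Nat.choose (k + 3) (i + 3) := by
  have h1 := Nat.add_one_mul_choose_eq (k + 1) (i + 1)
  have h2 := Nat.add_one_mul_choose_eq (k + 2) (i + 2)
  -- (k+2) * C(k+1,i+1) = C(k+2,i+2) * (i+2)
  -- (k+3) * C(k+2,i+2) = C(k+3,i+3) * (i+3)
  nlinarith [h1, h2]

lemma choose_two (k : ℕ) : Nat.choose (k + 3) 2 * 2 = (k + 3) * (k + 2) := by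
  have h := Nat.add_one_mul_choose_eq (k + 2) 1
  simp only [Nat.succ_eq_add_one, Nat.choose_one_right, show k + 2 + 1 = k + 3 from rfl, show (1:ℕ) + 1 = 2 from rfl] at h
  omega

lemma numer_eq (k : ℕ) (p q : ℝ) (hpq : q + p = 1) :
    (1 : ℝ) - p ^ (k + 3) - ((k:ℝ) + 3) * q * p ^ (k + 2)
      - ((k:ℝ) + 3) * ((k:ℝ) + 2) * q ^ 2 * p ^ (k + 1) / 2 - q ^ (k + 3)
    = ∑ i ∈ Finset.range k, (Nat.choose (k + 3) (i + 3) : ℝ) * q ^ (i + 3) * p ^ (k - i) := by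
  have hone : ((q + p) ^ (k + 3) : ℝ) = 1 := by rw [hpq]; exact one_pow _
  rw [add_pow] at hone
  rw [Finset.sum_range_succ, Finset.sum_range_succ', Finset.sum_range_succ',
    Finset.sum_range_succ'] at hone
  have hc2 : (((k + 3).choose 2 : ℕ) : ℝ) = (((k:ℝ) + 3) * ((k:ℝ) + 2)) / 2 := by
    have := choose_two k
    field_simp
    exact_mod_cast congrArg (Nat.cast : ℕ → ℝ) this
  simp only [show ∀ a : ℕ, a + 1 + 1 + 1 = a + 3 from fun a => rfl,
    show (0:ℕ) + 1 + 1 = 2 from rfl, show (0:ℕ) + 1 = 1 from rfl,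
    Nat.add_sub_add_right, Nat.choose_zero_right, Nat.choose_self,
    Nat.choose_one_right, Nat.sub_zero, Nat.sub_self, pow_zero,
    show k + 3 - 2 = k + 1 from rfl, show k + 3 - 1 = k + 2 from rfl] at hone
  rw [hc2] at hone
  rw [show (∑ i ∈ Finset.range k, ((k + 3).choose (i + 3) : ℝ) * q ^ (i + 3) * p ^ (k - i))
      = ∑ i ∈ Finset.range k, q ^ (i + 3) * p ^ (k - i) * ((k + 3).choose (i + 3) : ℝ) from
    Finset.sum_congr rfl fun i _ => by ring]
  push_cast at hone ⊢
  linarith [hone]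


lemma term_le (k i : ℕ) (p q : ℝ) (hp : 0 ≤ p) (hq : 0 ≤ q) :
    1 / ((i:ℝ) + 2) ^ 2 * (Nat.choose (k + 1) (i + 1) : ℝ) * q ^ (i + 1) * p ^ (k - i)
        * (((k:ℝ) + 2) * ((k:ℝ) + 3) * q ^ 2)
      ≤ 2 * (Nat.choose (k + 3) (i + 3) : ℝ) * q ^ (i + 3) * p ^ (k - i) := by
  have hcast : ((k:ℝ) + 2) * ((k:ℝ) + 3) * (Nat.choose (k + 1) (i + 1) : ℝ)
      = ((i:ℝ) + 2) * ((i:ℝ) + 3) * (Nat.choose (k + 3) (i + 3) : ℝ) := by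
    exact_mod_cast congrArg (Nat.cast : ℕ → ℝ) (choose_id k i)
  have hi2 : (0:ℝ) < ((i:ℝ) + 2) ^ 2 := by positivity
  rw [show 1 / ((i:ℝ) + 2) ^ 2 * (Nat.choose (k + 1) (i + 1) : ℝ) * q ^ (i + 1) * p ^ (k - i)
        * (((k:ℝ) + 2) * ((k:ℝ) + 3) * q ^ 2)
      = ((Nat.choose (k + 1) (i + 1) : ℝ) * q ^ (i + 1) * p ^ (k - i)
        * (((k:ℝ) + 2) * ((k:ℝ) + 3) * q ^ 2)) / ((i:ℝ) + 2) ^ 2 from by ring,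
    div_le_iff₀ hi2]
  rw [show (Nat.choose (k + 1) (i + 1) : ℝ) * q ^ (i + 1) * p ^ (k - i)
        * (((k:ℝ) + 2) * ((k:ℝ) + 3) * q ^ 2)
      = ((i:ℝ) + 2) * (((i:ℝ) + 3) * ((Nat.choose (k + 3) (i + 3) : ℝ)
        * (q ^ (i + 3) * p ^ (k - i)))) from by
    linear_combination (q ^ (i + 1) * p ^ (k - i) * q ^ 2) * hcast]
  nlinarith [mul_nonneg (mul_nonneg (by positivity : (0:ℝ) ≤ ((i:ℝ) + 2) * ((i:ℝ) + 1))
      (Nat.cast_nonneg ((k + 3).choose (i + 3)) : (0:ℝ) ≤ _))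
    (mul_nonneg (pow_nonneg hq (i + 3)) (pow_nonneg hp (k - i)))]

/-- For every integer `n ≥ 2` and every real `0 ≤ p < 1`,
`∑_{m=0}^{n-1} (1/(m+1)²)·C(n-1,m)·(1-p)^m·p^{n-1-m}
  ≤ (1-p)^{n-1}/n² + p^{n-1} + T₁`, where
`T₁ = 2(1 − p^{n+1} − (n+1)(1-p)p^n − (n+1)n(1-p)²p^{n-1}/2 − (1-p)^{n+1})
      /(n(n+1)(1-p)²)`. -/
theorem statement11 (n : ℕ) (hn : 2 ≤ n) (p : ℝ) (hp0 : 0 ≤ p) (hp1 : p < 1)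
    (T₁ : ℝ)
    (hT₁ : T₁ = 2 * (1 - p ^ (n + 1) - (n + 1 : ℝ) * (1 - p) * p ^ n
        - (n + 1 : ℝ) * n * (1 - p) ^ 2 * p ^ (n - 1) / 2 - (1 - p) ^ (n + 1))
        / ((n : ℝ) * (n + 1) * (1 - p) ^ 2)) :
    ∑ m ∈ Finset.range n,
        (1 / ((m : ℝ) + 1) ^ 2) * (Nat.choose (n - 1) m : ℝ) * (1 - p) ^ m * p ^ (n - 1 - m)
      ≤ (1 - p) ^ (n - 1) / (n : ℝ) ^ 2 + p ^ (n - 1) + T₁ := by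
  obtain ⟨k, rfl⟩ : ∃ k, n = k + 2 := ⟨n - 2, by omega⟩
  subst hT₁
  set q : ℝ := 1 - p with hqdef
  have hq : 0 < q := by rw [hqdef]; linarith
  have hpq : q + p = 1 := by rw [hqdef]; ring
  simp only [show k + 2 - 1 = k + 1 from rfl]
  rw [Finset.sum_range_succ, Finset.sum_range_succ']
  have hf0 : 1 / ((0:ℕ) + 1 : ℝ) ^ 2 * (Nat.choose (k + 1) 0 : ℝ) * q ^ 0 * p ^ (k + 1 - 0)
      = p ^ (k + 1) := by norm_num
  have hftop : 1 / (((k + 1 : ℕ) : ℝ) + 1) ^ 2 * (Nat.choose (k + 1) (k + 1) : ℝ) * q ^ (k + 1)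
      * p ^ (k + 1 - (k + 1)) = q ^ (k + 1) / ((k:ℝ) + 2) ^ 2 := by
    simp [Nat.choose_self]
    ring
  rw [hf0, hftop]
  have hD : (0:ℝ) < ((k + 2 : ℕ) : ℝ) * (((k + 2 : ℕ) : ℝ) + 1) * q ^ 2 := by positivity
  have hcast2 : (((k + 2 : ℕ) : ℝ)) = (k:ℝ) + 2 := by push_cast; ring
  have hN := numer_eq k p q hpq
  have hT1eq : 2 * (1 - p ^ (k + 2 + 1) - (((k + 2 : ℕ) : ℝ) + 1) * q * p ^ (k + 2)
        - (((k + 2 : ℕ) : ℝ) + 1) * ((k + 2 : ℕ) : ℝ) * q ^ 2 * p ^ (k + 1) / 2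
        - q ^ (k + 2 + 1))
        / (((k + 2 : ℕ) : ℝ) * (((k + 2 : ℕ) : ℝ) + 1) * q ^ 2)
      = 2 * (∑ i ∈ Finset.range k, (Nat.choose (k + 3) (i + 3) : ℝ) * q ^ (i + 3) * p ^ (k - i))
        / (((k:ℝ) + 2) * ((k:ℝ) + 3) * q ^ 2) := by
    rw [← hN]
    push_cast
    ring_nf
  rw [hT1eq]
  have hmain : ∑ i ∈ Finset.range k,
        1 / (((i + 1 : ℕ) : ℝ) + 1) ^ 2 * (Nat.choose (k + 1) (i + 1) : ℝ) * q ^ (i + 1)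
          * p ^ (k + 1 - (i + 1))
      ≤ 2 * (∑ i ∈ Finset.range k, (Nat.choose (k + 3) (i + 3) : ℝ) * q ^ (i + 3) * p ^ (k - i))
        / (((k:ℝ) + 2) * ((k:ℝ) + 3) * q ^ 2) := by
    rw [le_div_iff₀ (by positivity), Finset.sum_mul, Finset.mul_sum]
    apply Finset.sum_le_sum
    intro i _
    have := term_le k i p q hp0 hq.le
    push_cast
    calc 1 / ((i:ℝ) + 1 + 1) ^ 2 * (Nat.choose (k + 1) (i + 1) : ℝ) * q ^ (i + 1)
          * p ^ (k - i) * (((k:ℝ) + 2) * ((k:ℝ) + 3) * q ^ 2)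
        = 1 / ((i:ℝ) + 2) ^ 2 * (Nat.choose (k + 1) (i + 1) : ℝ) * q ^ (i + 1) * p ^ (k - i)
          * (((k:ℝ) + 2) * ((k:ℝ) + 3) * q ^ 2) := by ring
      _ ≤ 2 * (Nat.choose (k + 3) (i + 3) : ℝ) * q ^ (i + 3) * p ^ (k - i) := this
      _ = 2 * ((Nat.choose (k + 3) (i + 3) : ℝ) * q ^ (i + 3) * p ^ (k - i)) := by ring
  push_cast at hmain ⊢
  linarith [hmain]
end

section
/- For every integer n ≥ 2 and every real p with 0 ≤ p < 1, ∑_{m=0}^{n-2} (1/(m+2)²)·C(n-2, m)·(1-p)^{m+1}·p^{n-2-m} ≤ (1-p)^{n-1}/n² + T₂/n, where T₂ = ( 1 − p^n − n(1-p)p^{n-1} − (1-p)^n ) / ( (n-1)(1-p) ). -/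
open Finset

lemma key_sum (k : ℕ) (x p : ℝ) :
    ∑ m ∈ range (k+1), (Nat.choose (k+2) (m+2) : ℝ) * x^(m+2) * p^(k-m)
      = (x+p)^(k+2) - p^(k+2) - ((k:ℝ)+2)*x*p^(k+1) := by
  have h := add_pow x p (k+2)
  rw [show k+2+1 = (k+1)+1+1 from rfl, Finset.sum_range_succ', Finset.sum_range_succ'] at h
  have hc : ∀ m ∈ range (k+1),
      x^(m+1+1)*p^(k+2-(m+1+1))*((Nat.choose (k+2) (m+1+1)):ℝ)
        = (Nat.choose (k+2) (m+2) : ℝ) * x^(m+2) * p^(k-m) := by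
    intro m hm
    rw [show k+2-(m+1+1) = k-m from by omega]
    ring
  rw [Finset.sum_congr rfl hc] at h
  rw [h]
  simp [Nat.choose_one_right]
  ring

lemma choose_cast_id (k m : ℕ) :
    ((k:ℝ)+1) * ((k:ℝ)+2) * (Nat.choose k m : ℝ)
      = (Nat.choose (k+2) (m+2) : ℝ) * ((m:ℝ)+1) * ((m:ℝ)+2) := by
  have h1 : (k+1) * Nat.choose k m = Nat.choose (k+1) (m+1) * (m+1) :=
    Nat.add_one_mul_choose_eq k m
  have h2 : (k+2) * Nat.choose (k+1) (m+1) = Nat.choose (k+2) (m+2) * (m+2) :=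
    Nat.add_one_mul_choose_eq (k+1) (m+1)
  have key : (k+1)*(k+2)*Nat.choose k m = Nat.choose (k+2) (m+2) * (m+2) * (m+1) :=
    calc (k+1)*(k+2)*Nat.choose k m = (k+2)*((k+1)*Nat.choose k m) := by ring
      _ = (k+2)*(Nat.choose (k+1) (m+1)*(m+1)) := by rw [h1]
      _ = ((k+2)*Nat.choose (k+1) (m+1))*(m+1) := by ring
      _ = Nat.choose (k+2) (m+2) * (m+2) * (m+1) := by rw [h2]
  have := congrArg (Nat.cast : ℕ → ℝ) key
  push_cast at this
  linarith [this]

lemma bsum (k : ℕ) (x p : ℝ) (hx : 0 < x) :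
    ∑ m ∈ range (k+1), (1/(((m:ℝ)+1)*((m:ℝ)+2))) * (Nat.choose k m : ℝ) * x^(m+1) * p^(k-m)
      = ((x+p)^(k+2) - p^(k+2) - ((k:ℝ)+2)*x*p^(k+1)) / (((k:ℝ)+1)*((k:ℝ)+2)*x) := by
  rw [eq_div_iff (by positivity)]
  rw [Finset.sum_mul, ← key_sum k x p]
  refine Finset.sum_congr rfl (fun m hm => ?_)
  have h := choose_cast_id k m
  have hm1 : ((m:ℝ)+1) ≠ 0 := by positivity
  have hm2 : ((m:ℝ)+2) ≠ 0 := by positivity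
  field_simp
  linear_combination (x^(m+1)*p^(k-m)*x) * h

/-- For every integer `n ≥ 2` and every real `0 ≤ p < 1`,
`∑_{m=0}^{n-2} (1/(m+2)²)·C(n-2,m)·(1-p)^{m+1}·p^{n-2-m} ≤ (1-p)^{n-1}/n² + T₂/n`,
where `T₂ = (1 − p^n − n(1-p)p^{n-1} − (1-p)^n)/((n-1)(1-p))`. -/
theorem statement12 (n : ℕ) (hn : 2 ≤ n) (p : ℝ) (hp0 : 0 ≤ p) (hp1 : p < 1)
    (T₂ : ℝ)
    (hT₂ : T₂ = (1 - p ^ n - (n : ℝ) * (1 - p) * p ^ (n - 1) - (1 - p) ^ n)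
        / (((n : ℝ) - 1) * (1 - p))) :
    ∑ m ∈ Finset.range (n - 1),
        (1 / ((m : ℝ) + 2) ^ 2) * (Nat.choose (n - 2) m : ℝ) * (1 - p) ^ (m + 1) * p ^ (n - 2 - m)
      ≤ (1 - p) ^ (n - 1) / (n : ℝ) ^ 2 + T₂ / n := by
  obtain ⟨k, rfl⟩ : ∃ k, n = k + 2 := ⟨n - 2, by omega⟩
  have hx : 0 < 1 - p := by linarith
  have hx' : (1:ℝ) - p ≠ 0 := hx.ne'
  simp only [show k+2-1 = k+1 from by omega, show k+2-2 = k from rfl] at *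
  have hB := bsum k (1-p) p hx
  rw [show (1:ℝ)-p+p = 1 from by ring, one_pow] at hB
  have hmono : ∑ m ∈ range k,
      (1 / ((m : ℝ) + 2) ^ 2) * (Nat.choose k m : ℝ) * (1-p) ^ (m + 1) * p ^ (k - m)
      ≤ ∑ m ∈ range k,
      (1/(((m:ℝ)+1)*((m:ℝ)+2))) * (Nat.choose k m : ℝ) * (1-p)^(m+1) * p^(k-m) := by
    refine Finset.sum_le_sum (fun m hm => ?_)
    have hc : (0:ℝ) ≤ (Nat.choose k m : ℝ) * (1-p)^(m+1) * p^(k-m) := by positivity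
    have h1 : (1:ℝ) / ((m : ℝ) + 2) ^ 2 ≤ 1/(((m:ℝ)+1)*((m:ℝ)+2)) := by
      rw [div_le_div_iff₀ (by positivity) (by positivity)]
      nlinarith [sq_nonneg ((m:ℝ)+2)]
    calc (1 / ((m : ℝ) + 2) ^ 2) * (Nat.choose k m : ℝ) * (1-p) ^ (m + 1) * p ^ (k - m)
        = (1 / ((m : ℝ) + 2) ^ 2) * ((Nat.choose k m : ℝ) * (1-p) ^ (m + 1) * p ^ (k - m)) := by
          ring
      _ ≤ (1/(((m:ℝ)+1)*((m:ℝ)+2))) * ((Nat.choose k m : ℝ) * (1-p) ^ (m + 1) * p ^ (k - m)) :=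
          mul_le_mul_of_nonneg_right h1 hc
      _ = (1/(((m:ℝ)+1)*((m:ℝ)+2))) * (Nat.choose k m : ℝ) * (1-p)^(m+1) * p^(k-m) := by ring
  rw [Finset.sum_range_succ]
  rw [Finset.sum_range_succ] at hB
  have hlast : (1 / ((k : ℝ) + 2) ^ 2) * (Nat.choose k k : ℝ) * (1-p) ^ (k + 1) * p ^ (k - k)
      = (1-p)^(k+1) / ((k:ℝ)+2)^2 := by
    simp [Nat.choose_self, Nat.sub_self]
    ring
  have hk1 : ((k:ℝ)+1) ≠ 0 := by positivity
  have hk2 : ((k:ℝ)+2) ≠ 0 := by positivity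
  have hblast : (1/(((k:ℝ)+1)*((k:ℝ)+2))) * (Nat.choose k k : ℝ) * (1-p)^(k+1) * p^(k-k)
      = (1-p)^(k+1) / (((k:ℝ)+1)*((k:ℝ)+2)) := by
    rw [Nat.choose_self, Nat.sub_self, Nat.cast_one, pow_zero]
    field_simp
  rw [hblast] at hB
  have hT : T₂ / ((k:ℝ)+2)
      = (1 - p^(k+2) - ((k:ℝ)+2)*(1-p)*p^(k+1)) / (((k:ℝ)+1)*((k:ℝ)+2)*(1-p))
        - (1-p)^(k+1) / (((k:ℝ)+1)*((k:ℝ)+2)) := by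
    rw [hT₂]
    push_cast
    rw [show ((k:ℝ)+2) - 1 = (k:ℝ)+1 from by ring]
    field_simp
    ring
  push_cast
  rw [hlast]
  have hcast : ((k:ℝ)+2) = ((k+2:ℕ):ℝ) := by push_cast; ring
  push_cast at hT hB ⊢
  linarith [hmono, hB, hT]
end

section
/- For every integer n ≥ 2 and every real p with 0 ≤ p < 1, ∑_{m=0}^{n-2} (1/(m+2))·C(n-2, m)·(1-p)^{m+1}·p^{n-2-m} ≤ T₃/n, where T₃ = (n/(n-1))·( 1 − p^{n-1} − (1-p)^{n-1} ) + (1-p)^{n-1}. -/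
/-- Derivative-style binomial identity. -/
lemma st13_lem1 (x y : ℝ) (N : ℕ) :
    ∑ j ∈ Finset.range (N+1), (j:ℝ) * (N.choose j : ℝ) * x^j * y^(N-j)
      = (N:ℝ) * x * (x+y)^(N-1) := by
  cases N with
  | zero => simp
  | succ n =>
    rw [Finset.sum_range_succ' (fun j => (j:ℝ) * ((n+1).choose j : ℝ) * x^j * y^(n+1-j))]
    have h0 : ((0:ℕ):ℝ) * (((n+1).choose 0 : ℕ):ℝ) * x^0 * y^(n+1-0) = 0 := by simp
    rw [h0, add_zero]
    have hterm : ∀ i ∈ Finset.range (n+1),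
        ((i+1:ℕ):ℝ) * (((n+1).choose (i+1) : ℕ):ℝ) * x^(i+1) * y^(n+1-(i+1))
          = ((n:ℝ)+1) * x * ((n.choose i : ℝ) * x^i * y^(n-i)) := by
      intro i hi
      have h' : ((n+1) * n.choose i : ℕ) = ((n+1).choose (i+1) * (i+1) : ℕ) :=
        Nat.add_one_mul_choose_eq n i
      have h'' : ((n:ℝ)+1) * (n.choose i : ℝ) = ((n+1).choose (i+1) : ℝ) * ((i:ℝ)+1) := by
        exact_mod_cast congrArg (Nat.cast : ℕ → ℝ) h'
      have hsub : (n+1-(i+1)) = n - i := by omega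
      rw [hsub]
      push_cast
      linear_combination (-(x^(i+1) * y^(n-i))) * h''
    rw [Finset.sum_congr rfl hterm, ← Finset.mul_sum]
    have hpow : (x+y)^(n+1-1) = ∑ i ∈ Finset.range (n+1), (n.choose i:ℝ) * x^i * y^(n-i) := by
      rw [show n+1-1 = n from rfl, add_pow x y n]
      exact Finset.sum_congr rfl (fun i hi => by ring)
    rw [hpow]
    push_cast
    ring

/-- The key closed form for the shifted sum. -/
lemma st13_sum (k : ℕ) (p q : ℝ) (hpq : p + q = 1) :
    ∑ m ∈ Finset.range (k+1),
        ((m:ℝ)+1) * ((k+2).choose (m+2) : ℝ) * q^(m+2) * p^(k-m)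
      = ((k:ℝ)+2)*q - 1 + p^(k+2) := by
  have hfull : ∑ j ∈ Finset.range (k+3),
      ((j:ℝ)-1) * ((k+2).choose j : ℝ) * q^j * p^(k+2-j)
        = ((k:ℝ)+2)*q - 1 := by
    have h1 : ∑ j ∈ Finset.range (k+3),
        (j:ℝ) * ((k+2).choose j : ℝ) * q^j * p^(k+2-j)
          = ((k:ℝ)+2) * q * (q+p)^(k+1) := by
      have := st13_lem1 q p (k+2)
      convert this using 2 <;> push_cast <;> ring
    have h2 : ∑ j ∈ Finset.range (k+3),
        ((k+2).choose j : ℝ) * q^j * p^(k+2-j) = (q+p)^(k+2) := by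
      rw [add_pow q p (k+2)]
      exact Finset.sum_congr rfl (fun j hj => by ring)
    have hqp : q + p = 1 := by linarith
    rw [hqp] at h1 h2
    simp only [one_pow] at h1 h2
    calc ∑ j ∈ Finset.range (k+3), ((j:ℝ)-1) * ((k+2).choose j : ℝ) * q^j * p^(k+2-j)
        = (∑ j ∈ Finset.range (k+3), (j:ℝ) * ((k+2).choose j : ℝ) * q^j * p^(k+2-j))
          - ∑ j ∈ Finset.range (k+3), ((k+2).choose j : ℝ) * q^j * p^(k+2-j) := by
          rw [← Finset.sum_sub_distrib]
          exact Finset.sum_congr rfl (fun j hj => by ring)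
      _ = ((k:ℝ)+2)*q - 1 := by rw [h1, h2]; ring
  rw [Finset.sum_range_succ' (fun j => ((j:ℝ)-1) * ((k+2).choose j : ℝ) * q^j * p^(k+2-j)),
      Finset.sum_range_succ' (fun j => (((j+1:ℕ):ℝ)-1) * ((k+2).choose (j+1) : ℝ) * q^(j+1) * p^(k+2-(j+1)))] at hfull
  have e0 : (((0:ℕ):ℝ)-1) * ((k+2).choose 0 : ℝ) * q^0 * p^(k+2-0) = -p^(k+2) := by simp
  have e1 : (((0+1:ℕ):ℝ)-1) * ((k+2).choose (0+1) : ℝ) * q^(0+1) * p^(k+2-(0+1)) = 0 := by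
    norm_num
  rw [e0, e1] at hfull
  have hsum : ∑ m ∈ Finset.range (k+1),
      (((m+1+1:ℕ):ℝ)-1) * ((k+2).choose (m+1+1) : ℝ) * q^(m+1+1) * p^(k+2-(m+1+1))
        = ∑ m ∈ Finset.range (k+1),
      ((m:ℝ)+1) * ((k+2).choose (m+2) : ℝ) * q^(m+2) * p^(k-m) := by
    refine Finset.sum_congr rfl (fun m hm => ?_)
    have hsub : k+2-(m+1+1) = k - m := by omega
    rw [hsub]
    push_cast
    ring_nf
  rw [hsum] at hfull
  linarith [hfull]

/-- Three nonnegative terms of the binomial expansion are at most the whole. -/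
lemma st13_ineq (k : ℕ) (p q : ℝ) (hp : 0 ≤ p) (hq : 0 ≤ q) (hpq : p + q = 1) :
    q^(k+2) + p^(k+2) + ((k:ℝ)+2) * q * p^(k+1) ≤ 1 := by
  have h1 : (1:ℝ) = (p+q)^(k+2) := by rw [hpq]; simp
  rw [h1, add_pow p q (k+2)]
  have hsub : ({0, k+1, k+2} : Finset ℕ) ⊆ Finset.range (k+3) := by
    intro x hx
    simp only [Finset.mem_insert, Finset.mem_singleton] at hx
    rcases hx with h|h|h <;> simp [h]
  have hnonneg : ∀ i ∈ Finset.range (k+3), i ∉ ({0, k+1, k+2} : Finset ℕ) →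
      0 ≤ p^i * q^(k+2-i) * ((k+2).choose i : ℝ) := by
    intro i _ _
    positivity
  have := Finset.sum_le_sum_of_subset_of_nonneg hsub hnonneg
  refine le_trans (le_of_eq ?_) this
  have h01 : (0:ℕ) ∉ ({k+1, k+2} : Finset ℕ) := by simp
  have h12 : (k+1) ∉ ({k+2} : Finset ℕ) := by simp
  rw [Finset.sum_insert h01, Finset.sum_insert h12, Finset.sum_singleton]
  have e1 : k+2-(k+1) = 1 := by omega
  have e2 : k+2-(k+2) = 0 := by omega
  have e3 : k+2-0 = k+2 := by omega
  rw [e1, e2, e3]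
  simp only [Nat.choose_self, Nat.choose_zero_right, Nat.choose_succ_self_right,
    pow_zero, pow_one, Nat.cast_one, Nat.cast_add, Nat.cast_ofNat]
  push_cast
  ring

/-- Term rewriting identity. -/
lemma st13_term (k m : ℕ) (p q : ℝ) (hq : q ≠ 0) :
    (1 / ((m : ℝ) + 2)) * (Nat.choose k m : ℝ) * q ^ (m + 1) * p ^ (k - m)
      = (((m:ℝ)+1) * ((k+2).choose (m+2) : ℝ) * q^(m+2) * p^(k-m))
          / (((k:ℝ)+2) * ((k:ℝ)+1) * q) := by
  have h1 : (k+1) * k.choose m = (k+1).choose (m+1) * (m+1) := Nat.add_one_mul_choose_eq k m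
  have h2 : (k+2) * (k+1).choose (m+1) = (k+2).choose (m+2) * (m+2) :=
    Nat.add_one_mul_choose_eq (k+1) (m+1)
  have hnat : (k+2) * (k+1) * k.choose m = (k+2).choose (m+2) * ((m+2) * (m+1)) := by
    calc (k+2) * (k+1) * k.choose m = (k+2) * ((k+1) * k.choose m) := by ring
      _ = (k+2) * ((k+1).choose (m+1) * (m+1)) := by rw [h1]
      _ = ((k+2) * (k+1).choose (m+1)) * (m+1) := by ring
      _ = ((k+2).choose (m+2) * (m+2)) * (m+1) := by rw [h2]
      _ = (k+2).choose (m+2) * ((m+2) * (m+1)) := by ring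
  have hcast : ((k:ℝ)+2) * ((k:ℝ)+1) * (k.choose m : ℝ)
      = ((k+2).choose (m+2) : ℝ) * (((m:ℝ)+2) * ((m:ℝ)+1)) := by
    exact_mod_cast congrArg (Nat.cast : ℕ → ℝ) hnat
  have hm2 : ((m:ℝ)+2) ≠ 0 := by positivity
  have hk2 : ((k:ℝ)+2) ≠ 0 := by positivity
  have hk1 : ((k:ℝ)+1) ≠ 0 := by positivity
  field_simp
  linear_combination (q^(m+2) * p^(k-m)) * hcast

/-- The final division inequality. -/
lemma st13_final (k : ℕ) (p q : ℝ) (hp : 0 ≤ p) (hq : 0 < q) (hpq : p + q = 1) :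
    (((k:ℝ)+2)*q - 1 + p^(k+2)) / (((k:ℝ)+2) * ((k:ℝ)+1) * q)
      ≤ (((k:ℝ)+2) / ((k:ℝ)+1) * (1 - p^(k+1) - q^(k+1)) + q^(k+1)) / ((k:ℝ)+2) := by
  have hA := st13_ineq k p q hp (le_of_lt hq) hpq
  have hd1 : (0:ℝ) < ((k:ℝ)+2) * ((k:ℝ)+1) * q := by positivity
  have hd2 : (0:ℝ) < ((k:ℝ)+2) := by positivity
  have hk1 : ((k:ℝ)+1) ≠ 0 := by positivity
  rw [div_le_div_iff₀ hd1 hd2]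
  have hint : 0 ≤ ((k:ℝ)+2) *
      (1 - (q^(k+2) + p^(k+2) + ((k:ℝ)+2) * q * p^(k+1))) := by
    apply mul_nonneg (by positivity); linarith
  have hexp : (((k:ℝ)+2) / ((k:ℝ)+1) * (1 - p^(k+1) - q^(k+1)) + q^(k+1))
      * (((k:ℝ)+2) * ((k:ℝ)+1) * q)
      = ((k:ℝ)+2)^2 * q * (1 - p^(k+1) - q^(k+1)) + ((k:ℝ)+2)*((k:ℝ)+1) * (q^(k+1) * q) := by
    field_simp
  rw [hexp]
  have hP : p^(k+2) = p^(k+1) * p := by ring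
  have hQ : q^(k+2) = q^(k+1) * q := by ring
  nlinarith [hint, hP, hQ]

/-- For every integer `n ≥ 2` and every real `0 ≤ p < 1`,
`∑_{m=0}^{n-2} (1/(m+2))·C(n-2,m)·(1-p)^{m+1}·p^{n-2-m} ≤ T₃/n`,
where `T₃ = (n/(n-1))·(1 − p^{n-1} − (1-p)^{n-1}) + (1-p)^{n-1}`. -/
theorem statement13 (n : ℕ) (hn : 2 ≤ n) (p : ℝ) (hp0 : 0 ≤ p) (hp1 : p < 1)
    (T₃ : ℝ)
    (hT₃ : T₃ = (n : ℝ) / ((n : ℝ) - 1) * (1 - p ^ (n - 1) - (1 - p) ^ (n - 1))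
        + (1 - p) ^ (n - 1)) :
    ∑ m ∈ Finset.range (n - 1),
        (1 / ((m : ℝ) + 2)) * (Nat.choose (n - 2) m : ℝ) * (1 - p) ^ (m + 1) * p ^ (n - 2 - m)
      ≤ T₃ / n := by
  obtain ⟨k, rfl⟩ : ∃ k, n = k + 2 := ⟨n - 2, by omega⟩
  have hq0 : 0 < 1 - p := by linarith
  have hpq : p + (1 - p) = 1 := by ring
  have hs1 : k + 2 - 1 = k + 1 := rfl
  have hs2 : k + 2 - 2 = k := rfl
  rw [hs1] at hT₃
  rw [hs1, hs2]
  rw [Finset.sum_congr rfl (fun m hm => st13_term k m p (1-p) (ne_of_gt hq0)),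
    ← Finset.sum_div, st13_sum k p (1-p) hpq]
  have hfin := st13_final k p (1-p) hp0 hq0 hpq
  have hTeq : T₃ = ((k:ℝ)+2) / ((k:ℝ)+1) * (1 - p^(k+1) - (1-p)^(k+1)) + (1-p)^(k+1) := by
    rw [hT₃]; push_cast; ring_nf
  have hN : ((k+2:ℕ):ℝ) = (k:ℝ)+2 := by push_cast; ring
  rw [hTeq, hN]
  exact hfin
end
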